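/- arXiv:0911.2177 — 6 statements merged into one kernel-verified Lean document; each statement's English description precedes it below -/
import Mathlib

section
/- Let Γ be a connected graph and m > 1 such that every 1-sequence in VΓ is m-triangulable. Then for all vertices u, v, z and every path x_0, ..., x_n in VΓ from u to v, dist(z, {x_0,...,x_n}) ≤ (1/2)(dist(z,u) + dist(z,v) − dist(u,v) + 3m). -/
def IsMSeq {V : Type*} (G : SimpleGraph V) (m : ℕ) (l : List V) : Prop :=
  l ≠ [] ∧ l.head? = l.getLast? ∧ l.Chain' (fun a b => G.dist a b ≤ m)

inductive MRed {V : Type*} (G : SimpleGraph V) (m : ℕ) : List V → List V → Prop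
  | mk (l₁ : List V) (a b c : V) (l₂ : List V) (h : G.dist a c ≤ m) :
      MRed G m (l₁ ++ a :: b :: c :: l₂) (l₁ ++ a :: c :: l₂)

inductive Triangulable {V : Type*} (G : SimpleGraph V) (m : ℕ) : List V → Prop
  | base (l : List V) (h : l.length ≤ 4) : Triangulable G m l
  | step (l l' : List V) (h : MRed G m l l') (h' : Triangulable G m l') : Triangulable G m l

/-!
Close `p` into a loop `z ⇝ u ⇝ v ⇝ z` by geodesics and label every vertex by the arc (`0`, `1`
or `2`) it lies on. Along an `m`-triangulation of the loop the labels stay sorted and the loop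
keeps its endpoints at `z`. Either at some step the last surviving vertex `b` of label `1` is
deleted: its neighbours `a`, `c` then lie on the two geodesics and `a, b, c` are pairwise at
distance `≤ m`; or some vertex of `p` survives into a loop of length `≤ 4` through `z`, and so
lies within `m` of `z`. In both cases the bound follows from triangle inequalities.
-/

theorem List.exists_eq_append_cons_cons_cons_of_map_eq {α β : Type*} {f : α → β} {L : List α}
    {l₁ l₂ : List β} {a b c : β} (h : L.map f = l₁ ++ a :: b :: c :: l₂) :
    ∃ L₁ x y w L₂, L = L₁ ++ x :: y :: w :: L₂ ∧
      L₁.map f = l₁ ∧ f x = a ∧ f y = b ∧ f w = c ∧ L₂.map f = l₂ := by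
  obtain ⟨L₁, R₁, rfl, rfl, h₁⟩ := List.map_eq_append_iff.mp h
  obtain ⟨x, R₂, rfl, rfl, h₂⟩ := List.map_eq_cons_iff.mp h₁
  obtain ⟨y, R₃, rfl, rfl, h₃⟩ := List.map_eq_cons_iff.mp h₂
  obtain ⟨w, L₂, rfl, rfl, rfl⟩ := List.map_eq_cons_iff.mp h₃
  exact ⟨L₁, x, y, w, L₂, rfl, rfl, rfl, rfl, rfl, rfl⟩

namespace SimpleGraph

variable {V : Type*} {G : SimpleGraph V}

theorem Walk.dist_add_dist_le_length {s t x : V} (w : G.Walk s t) (hx : x ∈ w.support) :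
    G.dist s x + G.dist x t ≤ w.length := by
  classical
  calc G.dist s x + G.dist x t ≤ (w.takeUntil x hx).length + (w.dropUntil x hx).length :=
        add_le_add (dist_le _) (dist_le _)
    _ = w.length := by rw [← Walk.length_append, Walk.take_spec]

@[simp]
theorem Walk.head?_support {u v : V} (p : G.Walk u v) : p.support.head? = some u := by
  cases p <;> rfl

@[simp]
theorem Walk.getLast?_support {u v : V} (p : G.Walk u v) : p.support.getLast? = some v := by
  rw [List.getLast?_eq_some_getLast p.support_ne_nil, getLast_support]

theorem Walk.isChain_dist_le_one_support {u v : V} (p : G.Walk u v) :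
    p.support.IsChain (fun a b => G.dist a b ≤ 1) :=
  p.isChain_adj_support.imp fun _ _ h => (dist_eq_one_iff_adj.mpr h).le

theorem Walk.isChain_dist_le_one_support_append {u v : V} (p : G.Walk u v) {l : List V}
    (hl : l.IsChain (fun a b => G.dist a b ≤ 1)) (hhead : l.head? = some v) :
    (p.support ++ l).IsChain (fun a b => G.dist a b ≤ 1) :=
  p.isChain_dist_le_one_support.append hl fun x hx y hy => by
    obtain rfl : v = x := by simpa using hx
    obtain rfl : v = y := by simpa [hhead] using hy
    simp

theorem Walk.isMSeq_one_support_append {z u v : V} (q : G.Walk z u) (p : G.Walk u v)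
    (r : G.Walk v z) :
    IsMSeq G 1 (q.support ++ (p.support ++ r.support)) :=
  ⟨by simp, by simp, q.isChain_dist_le_one_support_append
      (p.isChain_dist_le_one_support_append r.isChain_dist_le_one_support (by simp)) (by simp)⟩

theorem dist_le_of_mem_of_length_le_four {m : ℕ} {l : List V} {z x : V} (hlen : l.length ≤ 4)
    (hhead : l.head? = some z) (hlast : l.getLast? = some z)
    (hchain : l.IsChain (fun a b => G.dist a b ≤ m)) (hx : x ∈ l) : G.dist z x ≤ m := by
  rcases l with _ | ⟨a, _ | ⟨b, _ | ⟨c, _ | ⟨d, _ | ⟨e, l⟩⟩⟩⟩⟩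
  all_goals simp_all only [List.head?_cons, List.getLast?_cons_cons, List.getLast?_singleton,
    Option.some.injEq, List.isChain_cons_cons, List.mem_cons, List.length_cons, List.not_mem_nil]
  all_goals first | omega | grind [dist_comm]

theorem Connected.two_mul_dist_add_dist_le_of_dist_le (hG : G.Connected) {u v z b : V} {m : ℕ}
    (hzb : G.dist z b ≤ m) : 2 * G.dist z b + G.dist u v ≤ G.dist z u + G.dist z v + 3 * m := by
  have huv : G.dist u v ≤ G.dist u z + G.dist z v := hG.dist_triangle
  have := G.dist_comm (u := u) (v := z)
  omega

theorem Connected.two_mul_dist_add_dist_le_of_tripod (hG : G.Connected) {u v z a b c : V}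
    {m : ℕ} (ha : G.dist z a + G.dist a u ≤ G.dist z u) (hc : G.dist v c + G.dist c z ≤ G.dist v z)
    (hab : G.dist a b ≤ m) (hbc : G.dist b c ≤ m) (hac : G.dist a c ≤ m) :
    2 * G.dist z b + G.dist u v ≤ G.dist z u + G.dist z v + 3 * m := by
  have hzb₁ : G.dist z b ≤ G.dist z a + G.dist a b := hG.dist_triangle
  have hzb₂ : G.dist z b ≤ G.dist z c + G.dist c b := hG.dist_triangle
  have huv₁ : G.dist u v ≤ G.dist u a + G.dist a v := hG.dist_triangle
  have huv₂ : G.dist a v ≤ G.dist a c + G.dist c v := hG.dist_triangle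
  have := G.dist_comm (u := u) (v := a)
  have := G.dist_comm (u := b) (v := c)
  have := G.dist_comm (u := c) (v := v)
  have := G.dist_comm (u := c) (v := z)
  have := G.dist_comm (u := v) (v := z)
  omega

end SimpleGraph

theorem Triangulable.exists_near_or_tripod {V ι : Type*} [PartialOrder ι] {G : SimpleGraph V}
    {m : ℕ} {l : List V} (hl : Triangulable G m l) {z : V} (hhead : l.head? = some z)
    (hlast : l.getLast? = some z) (hchain : l.IsChain (fun a b => G.dist a b ≤ m))
    {L : List (V × ι)} (hL : L.map Prod.fst = l) (hsorted : L.Pairwise (fun x y => x.2 ≤ y.2))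
    {j : ι} (hj : ∃ y ∈ L, y.2 = j) :
    ∃ y ∈ L, y.2 = j ∧ (G.dist z y.1 ≤ m ∨ ∃ x ∈ L, ∃ w ∈ L, x.2 < j ∧ j < w.2 ∧
      G.dist x.1 y.1 ≤ m ∧ G.dist y.1 w.1 ≤ m ∧ G.dist x.1 w.1 ≤ m) := by
  induction hl generalizing L with
  | base l hlen =>
    obtain ⟨y, hy, rfl⟩ := hj
    exact ⟨y, hy, rfl, .inl (SimpleGraph.dist_le_of_mem_of_length_le_four hlen hhead hlast hchain
      (hL ▸ List.mem_map_of_mem hy))⟩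
  | step l l' hred _ ih =>
    obtain ⟨l₁, a, b, c, l₂, hac⟩ := hred
    obtain ⟨L₁, x, y, w, L₂, rfl, rfl, rfl, rfl, rfl, rfl⟩ :=
      List.exists_eq_append_cons_cons_cons_of_map_eq hL
    have hsub : (L₁ ++ x :: w :: L₂).Sublist (L₁ ++ x :: y :: w :: L₂) := by simp
    have ⟨hxy, hyw⟩ : x.2 ≤ y.2 ∧ y.2 ≤ w.2 := by
      simp only [List.pairwise_append, List.pairwise_cons, List.mem_cons] at hsorted
      exact ⟨hsorted.2.1.1 y (.inl rfl), hsorted.2.1.2.1 w (.inl rfl)⟩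
    simp only [List.isChain_append_cons_cons, List.isChain_cons_cons] at hchain
    by_cases htripod : y.2 = j ∧ x.2 ≠ j ∧ w.2 ≠ j
    · obtain ⟨rfl, hx, hw⟩ := htripod
      exact ⟨y, by simp, rfl, .inr ⟨x, by simp, w, by simp, lt_of_le_of_ne hxy hx,
        lt_of_le_of_ne hyw (Ne.symm hw), hchain.2.1, hchain.2.2.1, hac⟩⟩
    · have hj' : ∃ y ∈ L₁ ++ x :: w :: L₂, y.2 = j := by
        obtain ⟨y', hy', rfl⟩ := hj
        simp only [List.mem_append, List.mem_cons] at hy'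
        grind
      obtain ⟨y', hy', hj', hnear⟩ := ih (by simpa using hhead) (by simpa using hlast)
        (List.isChain_append_cons_cons.mpr ⟨hchain.1, hac, hchain.2.2.2⟩)
        (by simp) (hsorted.sublist hsub) hj'
      exact ⟨y', hsub.subset hy', hj', hnear.imp_right fun ⟨x', hx', w', hw', h⟩ =>
        ⟨x', hsub.subset hx', w', hsub.subset hw', h⟩⟩

theorem Triangulable.exists_near_or_tripod_of_support_append {V : Type*} {G : SimpleGraph V}
    {m : ℕ} (hm : 1 ≤ m) {z u v : V} (q : G.Walk z u) (p : G.Walk u v) (r : G.Walk v z)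
    (hl : Triangulable G m (q.support ++ (p.support ++ r.support))) :
    ∃ b ∈ p.support, G.dist z b ≤ m ∨ ∃ a ∈ q.support, ∃ c ∈ r.support,
      G.dist a b ≤ m ∧ G.dist b c ≤ m ∧ G.dist a c ≤ m := by
  set L : List (V × ℕ) := q.support.map (·, 0) ++ (p.support.map (·, 1) ++ r.support.map (·, 2))
  have hL : L.map Prod.fst = q.support ++ (p.support ++ r.support) := by
    simp [L, Function.comp_def]
  have hsorted : L.Pairwise (fun x y => x.2 ≤ y.2) := by
    simp [L, List.pairwise_append, List.pairwise_map, List.pairwise_of_forall]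
  have hmem₀ : ∀ {x i}, (x, i) ∈ L → i < 1 → x ∈ q.support := by
    simp only [L, List.mem_append, List.mem_map, Prod.mk.injEq]; grind
  have hmem₁ : ∀ {x}, (x, 1) ∈ L → x ∈ p.support := by simp [L]
  have hmem₂ : ∀ {x i}, (x, i) ∈ L → 1 < i → x ∈ r.support := by
    simp only [L, List.mem_append, List.mem_map, Prod.mk.injEq]; grind
  obtain ⟨⟨b, _⟩, hb, rfl, hnear | ⟨⟨a, i⟩, ha, ⟨c, k⟩, hc, hi, hk, htripod⟩⟩ :=
    hl.exists_near_or_tripod (z := z) (by simp) (by simp)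
      ((q.isMSeq_one_support_append p r).2.2.imp fun _ _ h => h.trans hm) hL hsorted (j := 1)
      ⟨(u, 1), by simp [L], rfl⟩
  · exact ⟨b, hmem₁ hb, .inl hnear⟩
  · exact ⟨b, hmem₁ hb, .inr ⟨a, hmem₀ ha hi, c, hmem₂ hc hk, htripod⟩⟩

/-- If every 1-sequence in a connected graph is `m`-triangulable (`m > 1`), then for all
vertices `u, v, z` and every path `p` from `u` to `v`,
`dist(z, p) ≤ (1/2)(dist(z,u) + dist(z,v) − dist(u,v) + 3m)`
(stated without subtraction and division as
`2·dist(z,x) + dist(u,v) ≤ dist(z,u) + dist(z,v) + 3m` for some `x` on `p`). -/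
theorem triangulable_imp_path_ineq {V : Type*} (G : SimpleGraph V) (hG : G.Connected)
    (m : ℕ) (hm : 1 < m)
    (htri : ∀ l : List V, IsMSeq G 1 l → Triangulable G m l) :
    ∀ (u v z : V) (p : G.Walk u v), ∃ x ∈ p.support,
      2 * G.dist z x + G.dist u v ≤ G.dist z u + G.dist z v + 3 * m := by
  intro u v z p
  obtain ⟨q, hq⟩ := hG.exists_walk_length_eq_dist z u
  obtain ⟨r, hr⟩ := hG.exists_walk_length_eq_dist v z
  obtain ⟨b, hb, hnear | ⟨a, ha, c, hc, hab, hbc, hac⟩⟩ :=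
    (htri _ (q.isMSeq_one_support_append p r)).exists_near_or_tripod_of_support_append hm.le q p r
  · exact ⟨b, hb, hG.two_mul_dist_add_dist_le_of_dist_le hnear⟩
  · exact ⟨b, hb, hG.two_mul_dist_add_dist_le_of_tripod
      ((q.dist_add_dist_le_length ha).trans hq.le) ((r.dist_add_dist_le_length hc).trans hr.le)
      hab hbc hac⟩
end

section
/- If a connected graph Γ admits a strong tree decomposition into sets of diameter ≤ k, then Γ admits a uniform spanning tree: there is a tree T with vertex set VΓ and an identity bijection such that (1/3)·dist_T(u,v) ≤ dist_Γ(u,v) ≤ (2k+1)·dist_T(u,v) for all vertices u, v. -/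
/-!
Root the tree of parts at the part of a vertex `v₀`. Send every vertex of a non-root part `S`
to one fixed vertex of the parent part of `S` lying within distance `1` of `S`, and every vertex
of the root part to `v₀`. This parent map strictly decreases the rank
`2 · height(part) + [vertex ≠ v₀]`, so its graph `T` is a tree. A `T`-edge has `Γ`-length at most
`k + 1` (a diameter inside a part plus one crossing step). A `Γ`-edge joins two vertices of one
part, whose parents coincide, or of a part and its parent part, where the grandparent of one
endpoint is the parent of the other; either way their `T`-distance is at most `3`.
-/

/-- The 1-graph associated to a family of subsets. -/
def oneGraph {V : Type*} (G : SimpleGraph V) (P : Set (Set V)) : SimpleGraph P :=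
  SimpleGraph.fromRel (fun S T => ∃ u ∈ (S : Set V), ∃ v ∈ (T : Set V), G.dist u v ≤ 1)

lemma Setoid.IsPartition.exists_mem_iff_eq {V : Type*} {P : Set (Set V)}
    (hP : Setoid.IsPartition P) :
    ∃ π : V → P, ∀ a (S : P), a ∈ (S : Set V) ↔ π a = S := by
  choose S hS hunique using hP.2
  exact ⟨fun a => ⟨S a, (hS a).1⟩, fun a T =>
    ⟨fun h => Subtype.ext (hunique a T ⟨T.2, h⟩).symm, fun h => h ▸ (hS a).2⟩⟩

namespace SimpleGraph

variable {V ι : Type*}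

lemma Reachable.dist_le_mul_dist_of_forall_adj {H K : SimpleGraph V} {C : ℕ} (hK : K.Connected)
    (hE : ∀ a b, H.Adj a b → K.dist a b ≤ C) {u v : V} (huv : H.Reachable u v) :
    K.dist u v ≤ C * H.dist u v := by
  obtain ⟨p, hp⟩ := huv.exists_walk_length_eq_dist
  rw [← hp]
  clear hp huv
  induction p with
  | nil => simp
  | @cons a b c h q ih =>
    calc K.dist a c ≤ K.dist a b + K.dist b c := hK.dist_triangle
      _ ≤ C + C * q.length := Nat.add_le_add (hE a b h) ih
      _ = C * (Walk.cons h q).length := by rw [Walk.length_cons]; ring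

lemma IsTree.exists_parent {Q : SimpleGraph ι} (hQ : Q.IsTree) (r : ι) :
    ∃ (par : ι → ι) (ht : ι → ℕ), par r = r ∧
      (∀ S, S ≠ r → Q.Adj (par S) S ∧ ht (par S) + 1 = ht S) ∧
      (∀ S S', Q.Adj S S' → par S = S' ∨ par S' = S) := by
  choose p hp using fun S => (hQ.existsUnique_path r S).exists
  have hpr : p r = .nil := (hQ.existsUnique_path r r).unique (hp r) .nil
  refine ⟨fun S => (p S).penultimate, fun S => (p S).length, by simp [hpr], fun S hS => ?_,
    fun S S' hSS' => ?_⟩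
  · have hnil : ¬ (p S).Nil := fun h => hS (h.eq).symm
    have hadj := (p S).adj_penultimate hnil
    refine ⟨hadj, ?_⟩
    dsimp only
    rw [congrArg Walk.length (hQ.isAcyclic.path_concat (hp _) (hp S) hadj
      ((p S).getVert_mem_support _)), Walk.length_concat]
  · by_cases hS' : S' ∈ (p S).support
    · exact .inl (hQ.isAcyclic.eq_penultimate_of_adj_end (hp S) hSS' hS').symm
    · exact .inr (hQ.isAcyclic.eq_penultimate_of_adj_end (hp S') hSS'.symm
        (hQ.isAcyclic.mem_support_of_ne_mem_support_of_adj_of_isPath (hp S') (hp S)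
          hSS'.symm hS')).symm

def parentGraph (f : V → V) : SimpleGraph V := fromRel fun a b => b = f a

section parentGraph

variable {f : V → V}

lemma parentGraph_adj {a b : V} : (parentGraph f).Adj a b ↔ a ≠ b ∧ (b = f a ∨ a = f b) :=
  fromRel_adj ..

lemma dist_parentGraph_le_one (a : V) : (parentGraph f).dist a (f a) ≤ 1 := by
  by_cases h : a = f a
  · rw [← h, dist_self]
    exact zero_le_one
  · exact (dist_eq_one_iff_adj.mpr (parentGraph_adj.mpr ⟨h, .inl rfl⟩)).le

lemma dist_parentGraph_le_three (hT : (parentGraph f).Connected) {a b : V}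
    (h : f a = f b ∨ f (f a) = f b ∨ f (f b) = f a) : (parentGraph f).dist a b ≤ 3 := by
  have hle_two : ∀ {a b}, f a = f b → (parentGraph f).dist a b ≤ 2 := fun {a b} hab => by
    have hb := dist_parentGraph_le_one (f := f) b
    rw [← hab, dist_comm] at hb
    exact (hT.dist_triangle (v := f a)).trans (add_le_add (dist_parentGraph_le_one a) hb)
  have hle_three : ∀ {a b}, f (f a) = f b → (parentGraph f).dist a b ≤ 3 := fun {a b} hab =>
    (hT.dist_triangle (v := f a)).trans <| add_le_add (dist_parentGraph_le_one a) (hle_two hab)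
  rcases h with h | h | h
  · exact (hle_two h).trans (by norm_num)
  · exact hle_three h
  · exact dist_comm ▸ hle_three h

variable {g : V → ℕ} {r : V} (hr : f r = r) (hdec : ∀ v, v ≠ r → g (f v) < g v)
include hr hdec

lemma eq_of_parentGraph_adj_of_le {u y : V} (h : (parentGraph f).Adj u y) (hy : g y ≤ g u) :
    y = f u := by
  obtain ⟨hne, rfl | rfl⟩ := parentGraph_adj.mp h
  · rfl
  · by_cases hyr : y = r
    · exact absurd (hyr ▸ hr) (hyr ▸ hne)
    · exact absurd (hdec y hyr) (not_lt.mpr hy)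

lemma isTree_parentGraph : (parentGraph f).IsTree := by
  have hreach : ∀ v, (parentGraph f).Reachable v r := by
    intro v
    induction hv : g v using Nat.strong_induction_on generalizing v with
    | _ n ih =>
      by_cases hvr : v = r
      · exact hvr ▸ .refl _
      · have hlt := hdec v hvr
        have hadj : (parentGraph f).Adj v (f v) :=
          parentGraph_adj.mpr ⟨fun h => hlt.ne (congrArg g h.symm), .inl rfl⟩
        exact hadj.reachable.trans (ih _ (hv ▸ hlt) _ rfl)
  classical
  refine ⟨{ preconnected := fun a b => (hreach a).trans (hreach b).symm, nonempty := ⟨r⟩ },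
    fun x c hc => ?_⟩
  -- the two neighbours on the cycle of a vertex of maximal rank would both be its parent
  obtain ⟨u, hu, hmax⟩ := c.support.toFinset.exists_max_image g ⟨x, by simp⟩
  rw [List.mem_toFinset] at hu
  have hc' := hc.rotate hu
  have hle : ∀ y ∈ (c.rotate u hu).support, g y ≤ g u := fun y hy =>
    hmax y (by simpa using hy)
  have hnil := hc'.not_nil
  refine hc'.snd_ne_penultimate ?_
  rw [eq_of_parentGraph_adj_of_le hr hdec (Walk.adj_snd hnil)
      (hle _ (Walk.getVert_mem_support ..)),
    eq_of_parentGraph_adj_of_le hr hdec (Walk.adj_penultimate hnil).symm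
      (hle _ (Walk.getVert_mem_support ..))]

end parentGraph

section quotient

variable {G : SimpleGraph V} {Q : SimpleGraph ι} (π : V → ι) {k : ℕ} (hQ : Q.IsTree)
  (hdiam : ∀ a b, π a = π b → G.dist a b ≤ k)
  (hQ_adj : ∀ S S', Q.Adj S S' → ∃ x y, π x = S ∧ π y = S' ∧ G.dist x y ≤ 1)
  (hG_adj : ∀ a b, G.Adj a b → π a ≠ π b → Q.Adj (π a) (π b))
include hQ hdiam hQ_adj hG_adj

lemma exists_parent_map_of_isTree_quotient (hG : G.Connected) (v₀ : V) :
    ∃ (f : V → V) (g : V → ℕ), f v₀ = v₀ ∧ (∀ a, a ≠ v₀ → g (f a) < g a) ∧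
      (∀ a, G.dist a (f a) ≤ k + 1) ∧
      (∀ a b, G.Adj a b → f a = f b ∨ f (f a) = f b ∨ f (f b) = f a) := by
  classical
  have : Nonempty V := ⟨v₀⟩
  obtain ⟨par, ht, hpar_root, hpar, hpar_adj⟩ := hQ.exists_parent (π v₀)
  choose! x y hx hy hxy using fun S (hS : S ≠ π v₀) => hQ_adj _ _ (hpar S hS).1
  let F : ι → V := fun S => if S = π v₀ then v₀ else x S
  have hF : ∀ S, S ≠ π v₀ → π (F S) = par S := fun S hS => by simp [F, hS, hx S hS]
  have hF_par : ∀ a b, π a ≠ π b → par (π a) = π b → F (π (F (π a))) = F (π b) := by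
    intro a b hne h
    have ha : π a ≠ π v₀ := fun ha => hne (by rw [← h, ha, hpar_root])
    rw [hF _ ha, h]
  refine ⟨F ∘ π, fun a => 2 * ht (π a) + if a = v₀ then 0 else 1, by simp [F], ?_, ?_, ?_⟩
  · intro a ha
    by_cases hS : π a = π v₀
    · simp [F, hS, ha]
    · have := (hpar _ hS).2
      simp only [Function.comp, hF _ hS, ha, if_false]
      split_ifs <;> omega
  · intro a
    by_cases hS : π a = π v₀
    · simpa [F, hS] using (hdiam a v₀ hS).trans k.le_succ
    · simp only [Function.comp, F, if_neg hS]
      calc G.dist a (x (π a)) ≤ G.dist a (y (π a)) + G.dist (y (π a)) (x (π a)) :=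
          hG.dist_triangle
        _ ≤ k + 1 := add_le_add (hdiam _ _ (hy _ hS).symm) (dist_comm ▸ hxy _ hS)
  · intro a b hab
    by_cases hS : π a = π b
    · exact .inl (congrArg F hS)
    · rcases hpar_adj _ _ (hG_adj a b hab hS) with h | h
      · exact .inr (.inl (hF_par a b hS h))
      · exact .inr (.inr (hF_par b a (Ne.symm hS) h))

theorem exists_isTree_dist_le_of_isTree_quotient (hG : G.Connected) :
    ∃ T : SimpleGraph V, T.IsTree ∧
      ∀ u v, T.dist u v ≤ 3 * G.dist u v ∧ G.dist u v ≤ (k + 1) * T.dist u v := by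
  obtain ⟨v₀⟩ := hG.nonempty
  obtain ⟨f, g, hf₀, hdec, hfar, hnear⟩ :=
    exists_parent_map_of_isTree_quotient π hQ hdiam hQ_adj hG_adj hG v₀
  have hT := isTree_parentGraph hf₀ hdec
  refine ⟨parentGraph f, hT, fun u v => ⟨?_, ?_⟩⟩
  · exact (hG u v).dist_le_mul_dist_of_forall_adj hT.connected
      fun a b hab => dist_parentGraph_le_three hT.connected (hnear a b hab)
  · refine (hT.connected u v).dist_le_mul_dist_of_forall_adj hG fun a b hab => ?_
    obtain ⟨-, rfl | rfl⟩ := parentGraph_adj.mp hab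
    · exact hfar a
    · exact dist_comm ▸ hfar b

end quotient

end SimpleGraph

section oneGraph

variable {V : Type*} {G : SimpleGraph V} {P : Set (Set V)}

lemma exists_dist_le_one_of_oneGraph_adj {S S' : P} (h : (oneGraph G P).Adj S S') :
    ∃ x ∈ (S : Set V), ∃ y ∈ (S' : Set V), G.dist x y ≤ 1 := by
  obtain ⟨-, h | ⟨y, hy, x, hx, hyx⟩⟩ := (SimpleGraph.fromRel_adj ..).mp h
  · exact h
  · exact ⟨x, hx, y, hy, SimpleGraph.dist_comm ▸ hyx⟩

lemma oneGraph_adj_of_adj {S S' : P} (hne : S ≠ S') {a b : V} (ha : a ∈ (S : Set V))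
    (hb : b ∈ (S' : Set V)) (hab : G.Adj a b) : (oneGraph G P).Adj S S' :=
  (SimpleGraph.fromRel_adj ..).mpr
    ⟨hne, .inl ⟨a, ha, b, hb, (SimpleGraph.dist_eq_one_iff_adj.mpr hab).le⟩⟩

end oneGraph

/-- If a connected graph admits a strong tree decomposition into parts of diameter `≤ k`,
then it admits a uniform spanning tree: a tree on the same vertex set with
`(1/3)·dist_T(u,v) ≤ dist_Γ(u,v) ≤ (2k+1)·dist_T(u,v)` for all vertices `u, v`. -/
theorem strong_tree_decomp_uniform_spanning_tree {V : Type*} (G : SimpleGraph V)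
    (hG : G.Connected) (k : ℕ)
    (P : Set (Set V)) (hpart : Setoid.IsPartition P) (htree : (oneGraph G P).IsTree)
    (hdiam : ∀ S ∈ P, ∀ u ∈ S, ∀ v ∈ S, G.dist u v ≤ k) :
    ∃ T : SimpleGraph V, T.IsTree ∧
      ∀ u v : V, T.dist u v ≤ 3 * G.dist u v ∧ G.dist u v ≤ (2 * k + 1) * T.dist u v := by
  obtain ⟨π, hπ⟩ := hpart.exists_mem_iff_eq
  have hdiam' : ∀ a b, π a = π b → G.dist a b ≤ k := fun a b h =>
    hdiam _ (π a).2 a ((hπ a _).2 rfl) b ((hπ b _).2 h.symm)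
  have hQ_adj : ∀ S S', (oneGraph G P).Adj S S' →
      ∃ x y, π x = S ∧ π y = S' ∧ G.dist x y ≤ 1 := by
    intro S S' h
    obtain ⟨x, hx, y, hy, hxy⟩ := exists_dist_le_one_of_oneGraph_adj h
    exact ⟨x, y, (hπ x S).1 hx, (hπ y S').1 hy, hxy⟩
  have hG_adj : ∀ a b, G.Adj a b → π a ≠ π b → (oneGraph G P).Adj (π a) (π b) :=
    fun a b hab hne => oneGraph_adj_of_adj hne ((hπ a _).2 rfl) ((hπ b _).2 rfl) hab
  obtain ⟨T, hT, hdist⟩ :=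
    SimpleGraph.exists_isTree_dist_le_of_isTree_quotient π htree hdiam' hQ_adj hG_adj hG
  exact ⟨T, hT, fun u v =>
    ⟨(hdist u v).1, (hdist u v).2.trans (Nat.mul_le_mul_right _ (by omega))⟩⟩
end

section
/- Let Γ be the Cayley graph of an infinite finitely generated group G with respect to a finite generating set X, and suppose there is m > 0 such that for all u, v ∈ G, any geodesic η from u to v, any z on η, and any path γ from u to v, dist(z, γ) ≤ m. Then there exists a finite set S and a function α: G → S that is almost-right-G-invariant such that for every β: G → S almost equal to α, the right-stabilizer {g ∈ G : βg = β} is finite. -/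
/-- The Cayley graph of a group with respect to a generating set `X`: `g` and `h` are
adjacent iff `h = g * x` for some `x ∈ X` (symmetrized, loops removed). -/
def cayley (G : Type*) [Group G] (X : Set G) : SimpleGraph G :=
  SimpleGraph.fromRel (fun g h => ∃ x ∈ X, h = g * x)

/-- `α : G → S` is almost-right-`G`-invariant: for every `s` and `g`, the sets
`α⁻¹(s)·g` and `α⁻¹(s)` have finite symmetric difference. -/
def AlmostRightInvariant {G : Type*} [Group G] {S : Type*} (α : G → S) : Prop :=
  ∀ (g : G) (s : S),
    (symmDiff ((fun h => h * g) '' (α ⁻¹' {s})) (α ⁻¹' {s})).Finite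

/-- Two functions are almost equal if they differ at finitely many points. -/
def AlmostEq {G S : Type*} (α β : G → S) : Prop := {g : G | α g ≠ β g}.Finite

section Aux

variable {G : Type*} [Group G] {X : Set G}

private lemma cayley_adj {a b : G} :
    (cayley G X).Adj a b ↔ a ≠ b ∧ ((∃ x ∈ X, b = a * x) ∨ (∃ x ∈ X, a = b * x)) := by
  simp [cayley, SimpleGraph.fromRel_adj]

/-- Left multiplication is a graph homomorphism of the Cayley graph. -/
private def cayleyHom (c : G) : cayley G X →g cayley G X where
  toFun := fun a => c * a
  map_rel' := by
    intro a b hab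
    rw [cayley_adj] at hab ⊢
    obtain ⟨hne, hab⟩ := hab
    refine ⟨by simpa using hne, ?_⟩
    rcases hab with ⟨x, hx, rfl⟩ | ⟨x, hx, rfl⟩
    · exact Or.inl ⟨x, hx, by rw [mul_assoc]⟩
    · exact Or.inr ⟨x, hx, by rw [mul_assoc]⟩

private lemma cayley_reachable_one (hgen : Subgroup.closure X = ⊤) (g : G) :
    (cayley G X).Reachable 1 g := by
  have hg : g ∈ Subgroup.closure X := hgen ▸ Subgroup.mem_top g
  refine Subgroup.closure_induction (p := fun g _ => (cayley G X).Reachable 1 g)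
    ?_ (SimpleGraph.Reachable.refl 1) ?_ ?_ hg
  · intro x hx
    by_cases h1 : (1 : G) = x
    · rw [← h1]
    · exact SimpleGraph.Adj.reachable (cayley_adj.2 ⟨h1, Or.inl ⟨x, hx, (one_mul x).symm⟩⟩)
  · intro a b _ _ ra rb
    have : (cayley G X).Reachable (a * 1) (a * b) := rb.map (cayleyHom a)
    rw [mul_one] at this
    exact ra.trans this
  · intro a _ ra
    have : (cayley G X).Reachable (a⁻¹ * 1) (a⁻¹ * a) := ra.map (cayleyHom a⁻¹)
    rw [mul_one, inv_mul_cancel] at this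
    exact this.symm

private lemma cayley_connected (hgen : Subgroup.closure X = ⊤) : (cayley G X).Connected := by
  exact ⟨fun a b => (cayley_reachable_one hgen a).symm.trans (cayley_reachable_one hgen b)⟩

private lemma cayley_dist_mul_le (hgen : Subgroup.closure X = ⊤) (c a b : G) :
    (cayley G X).dist (c * a) (c * b) ≤ (cayley G X).dist a b := by
  obtain ⟨p, hp⟩ := ((cayley_connected hgen) a b).exists_walk_length_eq_dist
  calc (cayley G X).dist (c * a) (c * b) ≤ (p.map (cayleyHom c)).length := SimpleGraph.dist_le _
    _ = (cayley G X).dist a b := by rw [SimpleGraph.Walk.length_map, hp]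

private lemma cayley_dist_mul (hgen : Subgroup.closure X = ⊤) (c a b : G) :
    (cayley G X).dist (c * a) (c * b) = (cayley G X).dist a b := by
  refine le_antisymm (cayley_dist_mul_le hgen c a b) ?_
  have := cayley_dist_mul_le hgen c⁻¹ (c * a) (c * b)
  simpa [inv_mul_cancel_left] using this

private lemma cayley_dist_right (hgen : Subgroup.closure X = ⊤) (h g : G) :
    (cayley G X).dist h (h * g) = (cayley G X).dist 1 g := by
  have := cayley_dist_mul hgen h 1 g
  rwa [mul_one] at this

/-- Every vertex at positive distance from `1` has a neighbor one step closer. -/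
private lemma cayley_penult (hgen : Subgroup.closure X = ⊤) {g : G}
    (hpos : 0 < (cayley G X).dist 1 g) :
    ∃ b : G, (cayley G X).Adj b g ∧
      (cayley G X).dist 1 b + 1 = (cayley G X).dist 1 g := by
  obtain ⟨w, hw⟩ := (cayley_reachable_one hgen g).exists_walk_length_eq_dist
  cases w with
  | nil =>
    rw [SimpleGraph.dist_self] at hpos
    omega
  | @cons _ c _ hadj p =>
    obtain ⟨b, q, hadj', heq⟩ := SimpleGraph.Walk.exists_cons_eq_concat hadj p
    rw [heq, SimpleGraph.Walk.length_concat] at hw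
    have hble : (cayley G X).dist 1 b ≤ q.length := SimpleGraph.dist_le q
    have hbge : (cayley G X).dist 1 g ≤ (cayley G X).dist 1 b + 1 := by
      have htr := (cayley_connected hgen).dist_triangle (u := 1) (v := b) (w := g)
      have hbg : (cayley G X).dist b g ≤ 1 := by
        have := SimpleGraph.dist_le (SimpleGraph.Walk.cons hadj' SimpleGraph.Walk.nil)
        simpa using this
      omega
    exact ⟨b, hadj', by omega⟩

/-- Balls in the Cayley graph of a finitely generated group are finite. -/
private lemma cayley_ball_finite (hX : X.Finite) (hgen : Subgroup.closure X = ⊤) (R : ℕ) :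
    {g : G | (cayley G X).dist 1 g ≤ R}.Finite := by
  induction R with
  | zero =>
    refine (Set.finite_singleton (1 : G)).subset ?_
    intro g hg
    have hr : (cayley G X).Reachable 1 g := cayley_reachable_one hgen g
    have h0 : (cayley G X).dist 1 g = 0 := Nat.le_zero.mp hg
    rcases SimpleGraph.dist_eq_zero_iff_eq_or_not_reachable.mp h0 with h | h
    · exact h.symm
    · exact absurd hr h
  | succ R ih =>
    refine (ih.union (Set.Finite.image2 (fun a x => a * x) ih (hX.union hX.inv))).subset ?_
    intro g hg
    simp only [Set.mem_setOf_eq] at hg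
    by_cases hle : (cayley G X).dist 1 g ≤ R
    · exact Or.inl hle
    · right
      have hpos : 0 < (cayley G X).dist 1 g := by omega
      obtain ⟨b, hadj, hb⟩ := cayley_penult hgen hpos
      have hble : (cayley G X).dist 1 b ≤ R := by omega
      rw [cayley_adj] at hadj
      rcases hadj.2 with ⟨x, hx, hgx⟩ | ⟨x, hx, hbx⟩
      · -- g = b * x
        exact Set.mem_image2.mpr ⟨b, hble, x, Or.inl hx, hgx.symm⟩
      · -- b = g * x, so g = b * x⁻¹
        exact Set.mem_image2.mpr ⟨b, hble, x⁻¹, Or.inr (Set.inv_mem_inv.mpr hx),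
          by rw [hbx, mul_assoc, mul_inv_cancel, mul_one]⟩

private lemma cayley_exists_far [Infinite G] (hX : X.Finite) (hgen : Subgroup.closure X = ⊤)
    (R : ℕ) : ∃ g : G, R < (cayley G X).dist 1 g := by
  by_contra h
  push_neg at h
  have : (Set.univ : Set G).Finite :=
    (cayley_ball_finite hX hgen R).subset (fun g _ => h g)
  exact Set.infinite_univ this

/-- Distance from the origin decreases by at most the length along a walk. -/
private lemma cayley_support_dist (hgen : Subgroup.closure X = ⊤) :
    ∀ {a b : G} (w : (cayley G X).Walk a b) (v : G), v ∈ w.support →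
      (cayley G X).dist 1 a ≤ (cayley G X).dist 1 v + w.length := by
  intro a b w
  induction w with
  | nil =>
    intro v hv
    simp only [SimpleGraph.Walk.support_nil, List.mem_singleton] at hv
    subst hv; simp
  | @cons a c b hadj w ih =>
    intro v hv
    rw [SimpleGraph.Walk.support_cons, List.mem_cons] at hv
    rcases hv with rfl | hv
    · simp only [SimpleGraph.Walk.length_cons]; omega
    · have h1 : (cayley G X).dist 1 a ≤ (cayley G X).dist 1 c + 1 := by
        have htr := (cayley_connected hgen).dist_triangle (u := 1) (v := c) (w := a)
        have : (cayley G X).dist c a ≤ 1 := by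
          have := SimpleGraph.dist_le (SimpleGraph.Walk.cons hadj.symm SimpleGraph.Walk.nil)
          simpa using this
        omega
      have h2 := ih v hv
      simp only [SimpleGraph.Walk.length_cons]
      omega

/-- `Conn X m a b`: `a` and `b` are connected in the Cayley graph avoiding the
closed ball of radius `m` around the identity. -/
private def Conn (X : Set G) (m : ℕ) (a b : G) : Prop :=
  ∃ w : (cayley G X).Walk a b, ∀ v ∈ w.support, m < (cayley G X).dist 1 v

private lemma Conn.symm {m : ℕ} {a b : G} (h : Conn X m a b) : Conn X m b a := by
  obtain ⟨w, hw⟩ := h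
  exact ⟨w.reverse, fun v hv => hw v (by rwa [SimpleGraph.Walk.support_reverse,
    List.mem_reverse] at hv)⟩

private lemma Conn.trans {m : ℕ} {a b c : G} (h1 : Conn X m a b) (h2 : Conn X m b c) :
    Conn X m a c := by
  obtain ⟨w1, hw1⟩ := h1
  obtain ⟨w2, hw2⟩ := h2
  refine ⟨w1.append w2, fun v hv => ?_⟩
  rcases (SimpleGraph.Walk.mem_support_append_iff _ _).mp hv with h | h
  · exact hw1 v h
  · exact hw2 v h

/-- If `a` is far from the origin compared to its distance to `b`, then `a` and `b`
are connected avoiding the `m`-ball. -/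
private lemma conn_of_dist (hgen : Subgroup.closure X = ⊤) {m : ℕ} {a b : G}
    (h : m + (cayley G X).dist a b < (cayley G X).dist 1 a) : Conn X m a b := by
  obtain ⟨w, hw⟩ := ((cayley_connected hgen) a b).exists_walk_length_eq_dist
  refine ⟨w, fun v hv => ?_⟩
  have := cayley_support_dist hgen w v hv
  omega

/-- Every point outside the `m`-ball is connected, avoiding the `m`-ball, to a point
on the sphere of radius `m+1`. -/
private lemma conn_trace (hgen : Subgroup.closure X = ⊤) {m : ℕ} :
    ∀ (g : G), m < (cayley G X).dist 1 g →
      ∃ y : G, (cayley G X).dist 1 y = m + 1 ∧ Conn X m y g := by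
  have key : ∀ (n : ℕ) (g : G), (cayley G X).dist 1 g = m + 1 + n →
      ∃ y : G, (cayley G X).dist 1 y = m + 1 ∧ Conn X m y g := by
    intro n
    induction n with
    | zero =>
      intro g hg
      refine ⟨g, by omega, SimpleGraph.Walk.nil, ?_⟩
      intro v hv
      simp only [SimpleGraph.Walk.support_nil, List.mem_singleton] at hv
      subst hv; omega
    | succ n ih =>
      intro g hg
      have hpos : 0 < (cayley G X).dist 1 g := by omega
      obtain ⟨b, hadj, hb⟩ := cayley_penult hgen hpos
      have hbdist : (cayley G X).dist 1 b = m + 1 + n := by omega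
      obtain ⟨y, hy, cy⟩ := ih b hbdist
      refine ⟨y, hy, cy.trans ⟨SimpleGraph.Walk.cons hadj SimpleGraph.Walk.nil, ?_⟩⟩
      intro v hv
      simp only [SimpleGraph.Walk.support_cons, SimpleGraph.Walk.support_nil,
        List.mem_cons, List.mem_singleton] at hv
      rcases hv with rfl | rfl | h
      · omega
      · omega
      · simp at h
  intro g hg
  obtain ⟨n, hn⟩ : ∃ n : ℕ, (cayley G X).dist 1 g = m + 1 + n :=
    ⟨(cayley G X).dist 1 g - (m + 1), by omega⟩
  exact key n g hn

/-- Points on geodesics from the identity exist at every intermediate distance. -/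
private lemma exists_midpoint (hgen : Subgroup.closure X = ⊤) :
    ∀ (t : ℕ) (g : G), t ≤ (cayley G X).dist 1 g →
      ∃ p : G, (cayley G X).dist 1 p = t ∧
        (cayley G X).dist p g = (cayley G X).dist 1 g - t := by
  intro t
  induction t with
  | zero => intro g _; exact ⟨1, by simp, by simp⟩
  | succ t ih =>
    intro g hle
    obtain ⟨p, hp, hpg⟩ := ih g (by omega)
    obtain ⟨w, hw⟩ := ((cayley_connected hgen) p g).exists_walk_length_eq_dist
    cases w with
    | nil =>
      simp only [SimpleGraph.Walk.length_nil] at hw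
      omega
    | @cons p c g hadj q =>
      simp only [SimpleGraph.Walk.length_cons] at hw
      have hpc : (cayley G X).dist p c ≤ 1 := by
        have := SimpleGraph.dist_le (SimpleGraph.Walk.cons hadj SimpleGraph.Walk.nil)
        simpa using this
      have hcg : (cayley G X).dist c g ≤ q.length := SimpleGraph.dist_le q
      have htr1 := (cayley_connected hgen).dist_triangle (u := 1) (v := p) (w := c)
      have htr2 := (cayley_connected hgen).dist_triangle (u := 1) (v := c) (w := g)
      have htr3 := (cayley_connected hgen).dist_triangle (u := p) (v := c) (w := g)
      have hc1 : (cayley G X).dist 1 c = t + 1 := by omega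
      exact ⟨c, hc1, by omega⟩

end Aux

/-- If in the Cayley graph of an infinite finitely generated group every point of a geodesic
from `u` to `v` is at distance at most `m` from every path from `u` to `v`, then there is a
finite set `S` and an almost-right-invariant `α : G → S` such that every `β` almost equal
to `α` has finite right-stabilizer. -/
theorem geodesic_path_condition_gives_almost_invariant_function
    {G : Type*} [Group G] [Infinite G] (X : Set G) (hX : X.Finite)
    (hgen : Subgroup.closure X = ⊤) (m : ℕ) (hm : 0 < m)
    (hgeo : ∀ (u v : G) (η : (cayley G X).Walk u v),
      η.length = (cayley G X).dist u v →
      ∀ z ∈ η.support, ∀ γ : (cayley G X).Walk u v,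
        ∃ x ∈ γ.support, (cayley G X).dist z x ≤ m) :
    ∃ (S : Type) (_ : Finite S) (α : G → S), AlmostRightInvariant α ∧
      ∀ β : G → S, AlmostEq α β → {g : G | ∀ h : G, β (h * g) = β h}.Finite := by
  classical
  have hconn := cayley_connected hgen
  -- the sphere of radius m+1 is finite; enumerate it
  have hsph : {y : G | (cayley G X).dist 1 y = m + 1}.Finite :=
    (cayley_ball_finite hX hgen (m + 1)).subset (fun y hy => le_of_eq hy)
  obtain ⟨n, f, hf⟩ := hsph.fin_embedding
  -- α records which sphere points are connected to g avoiding the m-ball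
  set α : G → (Fin n → Prop) := fun g i => Conn X m (f i) g with hαdef
  -- Separation: if `1` lies on a geodesic from `h` to `h*g`, with both endpoints
  -- outside the m-ball, then `α h ≠ α (h * g)`.
  have hsep : ∀ h g : G,
      m < (cayley G X).dist 1 h → m < (cayley G X).dist 1 (h * g) →
      (cayley G X).dist 1 h + (cayley G X).dist 1 (h * g) = (cayley G X).dist h (h * g) →
      α h ≠ α (h * g) := by
    intro h g hh hhg hmid hαeq
    obtain ⟨w1, hw1⟩ := (hconn h 1).exists_walk_length_eq_dist
    obtain ⟨w2, hw2⟩ := (hconn 1 (h * g)).exists_walk_length_eq_dist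
    have hηlen : (w1.append w2).length = (cayley G X).dist h (h * g) := by
      rw [SimpleGraph.Walk.length_append, hw1, hw2,
        SimpleGraph.dist_comm (u := h) (v := 1), hmid]
    have h1mem : (1 : G) ∈ (w1.append w2).support :=
      (SimpleGraph.Walk.mem_support_append_iff _ _).mpr
        (Or.inl (SimpleGraph.Walk.end_mem_support w1))
    -- get a sphere point connected to h avoiding the ball
    obtain ⟨y, hy, cy⟩ := conn_trace hgen h hh
    have hyr : y ∈ Set.range f := hf ▸ hy
    obtain ⟨i, rfl⟩ := hyr
    have hαh : α h i := cy
    have hαhg : Conn X m (f i) (h * g) := (congrFun hαeq i).mp hαh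
    obtain ⟨wa, hwa⟩ : Conn X m (f i) h := hαh
    obtain ⟨wb, hwb⟩ := hαhg
    obtain ⟨x, hxmem, hxle⟩ :=
      hgeo h (h * g) (w1.append w2) hηlen 1 h1mem (wa.reverse.append wb)
    rcases (SimpleGraph.Walk.mem_support_append_iff _ _).mp hxmem with hx1 | hx2
    · have := hwa x (by rwa [SimpleGraph.Walk.support_reverse, List.mem_reverse] at hx1)
      omega
    · have := hwb x hx2
      omega
  -- α is nearly unchanged by right multiplication
  have hkey : ∀ (g h : G), m + (cayley G X).dist 1 g < (cayley G X).dist 1 h →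
      α (h * g) = α h := by
    intro g h hfar
    have hc : Conn X m h (h * g) := by
      refine conn_of_dist hgen ?_
      rw [cayley_dist_right hgen]
      omega
    funext i
    exact propext ⟨fun c => Conn.trans c hc.symm, fun c => Conn.trans c hc⟩
  have hinv : AlmostRightInvariant α := by
    intro g s
    refine ((cayley_ball_finite hX hgen (m + (cayley G X).dist 1 g)).image
      (fun h => h * g)).subset ?_
    intro z hz
    rw [Set.mem_symmDiff] at hz
    rcases hz with ⟨⟨h, hhs, rfl⟩, hz2⟩ | ⟨hz1, hz2⟩
    · -- α h = s but α (h*g) ≠ s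
      refine ⟨h, ?_, rfl⟩
      by_contra hball
      simp only [Set.mem_setOf_eq, not_le] at hball
      refine hz2 ?_
      rw [Set.mem_preimage, Set.mem_singleton_iff, hkey g h hball]
      exact hhs
    · -- α z = s but z ∉ (·*g) '' α⁻¹'{s}
      refine ⟨z * g⁻¹, ?_, by simp⟩
      by_contra hball
      simp only [Set.mem_setOf_eq, not_le] at hball
      have hzz := hkey g (z * g⁻¹) hball
      rw [inv_mul_cancel_right] at hzz
      refine hz2 ⟨z * g⁻¹, ?_, by simp⟩
      rw [Set.mem_preimage, Set.mem_singleton_iff, ← hzz]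
      exact hz1
  refine ⟨Fin n → Prop, inferInstance, α, hinv, ?_⟩
  intro β hab
  by_contra hinf
  have hinf' : {g : G | ∀ h : G, β (h * g) = β h}.Infinite := hinf
  obtain ⟨K, hK⟩ : ∃ K : ℕ, ∀ x ∈ {g : G | α g ≠ β g}, (cayley G X).dist 1 x ≤ K := by
    obtain ⟨K, hK⟩ := (hab.image ((cayley G X).dist 1)).bddAbove
    exact ⟨K, fun x hx => hK (Set.mem_image_of_mem _ hx)⟩
  set t := m + 1 + K with htdef
  obtain ⟨g, hgT, hgfar⟩ : ∃ g : G, (∀ h : G, β (h * g) = β h) ∧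
      2 * t < (cayley G X).dist 1 g := by
    obtain ⟨g, hg1, hg2⟩ := (hinf'.diff (cayley_ball_finite hX hgen (2 * t))).nonempty
    refine ⟨g, hg1, ?_⟩
    simp only [Set.mem_setOf_eq, not_le] at hg2
    exact hg2
  obtain ⟨p, hp, hpg⟩ := exists_midpoint hgen t g (by omega)
  have hdh : (cayley G X).dist 1 p⁻¹ = t := by
    have h1 := cayley_dist_mul hgen p 1 p⁻¹
    rw [mul_one, mul_inv_cancel] at h1
    rw [← h1, SimpleGraph.dist_comm]
    exact hp
  have hdhg : (cayley G X).dist 1 (p⁻¹ * g) = (cayley G X).dist 1 g - t := by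
    have h1 := cayley_dist_mul hgen p 1 (p⁻¹ * g)
    rw [mul_one, ← mul_assoc, mul_inv_cancel, one_mul] at h1
    rw [← h1]
    exact hpg
  have hdhhg : (cayley G X).dist p⁻¹ (p⁻¹ * g) = (cayley G X).dist 1 g :=
    cayley_dist_right hgen p⁻¹ g
  have hne := hsep p⁻¹ g (by omega) (by omega) (by omega)
  have h1 : α p⁻¹ = β p⁻¹ := by
    by_contra hc
    have := hK p⁻¹ hc
    omega
  have h2 : α (p⁻¹ * g) = β (p⁻¹ * g) := by
    by_contra hc
    have := hK _ hc
    omega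
  exact hne (by rw [h1, h2, hgT p⁻¹])
end

section
/- Let G be a free group with free generating set X, and define α: G → S where S = {1} ∪ X ∪ X⁻¹ by α(1) = 1 and α(g) = the first letter of the reduced word representing g for g ≠ 1. Then α is almost-right-G-invariant, and for every function β: G → S almost equal to α, the right-stabilizer {g ∈ G : βg = β} is trivial (hence finite). -/
/-- The "first letter" function on a free group: `1 ↦ none` and a nontrivial element maps
to the first letter (a generator or its inverse, encoded in `X × Bool`) of the reduced
word representing it. -/
def firstLetter {X : Type*} [DecidableEq X] (g : FreeGroup X) : Option (X × Bool) :=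
  g.toWord.head?

section RightTranslation

variable {G S : Type*} [Group G]

theorem almostRightInvariant_of_finite {α : G → S} (hα : ∀ g, {x | α (x * g) ≠ α x}.Finite) :
    AlmostRightInvariant α := by
  intro g s
  refine ((hα g).image (· * g)).subset ?_
  rintro y (⟨⟨x, hx, rfl⟩, hy⟩ | ⟨hy, hy'⟩)
  · exact ⟨x, fun e => hy (e.trans hx), rfl⟩
  · have hyg : y * g⁻¹ * g = y := inv_mul_cancel_right y g
    refine ⟨y * g⁻¹, fun e => hy' ⟨y * g⁻¹, ?_, hyg⟩, hyg⟩
    simp only [Set.mem_preimage, Set.mem_singleton_iff] at hy ⊢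
    rwa [← e, hyg]

theorem AlmostEq.comp_mul_right {α β : G → S} {k : G} (hα : {x | α (x * k) ≠ α x}.Finite)
    (hαβ : AlmostEq α β) : AlmostEq α (fun x => β (x * k)) := by
  refine (hα.union (hαβ.preimage (mul_left_injective k).injOn)).subset fun x hx => ?_
  by_contra hx'
  simp only [Set.mem_union, Set.mem_ofPred_eq, Set.mem_preimage, not_or, not_not] at hx hx'
  exact hx (hx'.1.symm.trans hx'.2)

theorem apply_mul_zpow_eq {β : G → S} {g : G} (hg : ∀ x, β (x * g) = β x) (n : ℤ) (x : G) :
    β (x * g ^ n) = β x := by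
  induction n using Int.induction_on with
  | zero => simp
  | succ n ih => rw [zpow_add_one, ← mul_assoc, hg, ih]
  | pred n ih => rw [← ih, zpow_sub_one, ← hg, mul_assoc, mul_assoc, inv_mul_cancel, mul_one]

end RightTranslation

namespace FreeGroup

variable {X : Type*} [DecidableEq X]

theorem toWord_mul_mk_singleton (h : FreeGroup X) (a : X × Bool) :
    (h * mk [a]).toWord = h.toWord.dropLast ∨ (h * mk [a]).toWord = h.toWord ++ [a] := by
  rw [← mk_toWord (x := h), mul_mk, toWord_mk, toWord_mk, reduce_toWord]
  have hred : IsReduced h.toWord := isReduced_toWord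
  generalize h.toWord = W at hred ⊢
  rcases W.eq_nil_or_concat' with rfl | ⟨L, ⟨b1, b2⟩, rfl⟩
  · simp
  obtain ⟨a1, a2⟩ := a
  by_cases hba : b1 = a1 → b2 = a2
  · right
    exact IsReduced.reduce_eq (List.isChain_append.2 ⟨hred, .singleton _, by simpa using hba⟩)
  · obtain ⟨rfl, rfl⟩ : b1 = a1 ∧ b2 = !a2 := by
      rw [Classical.not_imp] at hba; exact ⟨hba.1, Bool.eq_not_iff.2 hba.2⟩
    have hstep : Red.Step (L ++ (b1, !a2) :: (b1, !!a2) :: []) (L ++ []) := Red.Step.not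
    rw [Bool.not_not, List.append_nil] at hstep
    rw [List.dropLast_concat, List.append_assoc, List.singleton_append, reduce.Step.eq hstep,
      (hred.infix ⟨[], [_], rfl⟩).reduce_eq]
    exact .inl rfl

theorem norm_le_norm_mul_add_norm (h k : FreeGroup X) : h.norm ≤ (h * k).norm + k.norm := by
  simpa using norm_mul_le (h * k) k⁻¹

theorem finite_setOf_norm_le [Finite X] (n : ℕ) : {h : FreeGroup X | h.norm ≤ n}.Finite :=
  (List.finite_length_le _ n).preimage toWord_injective.injOn

theorem IsCyclicallyReduced.toWord_pow {g : FreeGroup X} (hg : IsCyclicallyReduced g.toWord)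
    (n : ℕ) : (g ^ n).toWord = (List.replicate n g.toWord).flatten := by
  rw [FreeGroup.toWord_pow, (hg.flatten_replicate n).isReduced.reduce_eq]

end FreeGroup

open FreeGroup

section FirstLetter

variable {X : Type*} [DecidableEq X]

theorem firstLetter_mul_mk_singleton {h : FreeGroup X} (hh : 2 ≤ h.norm) (a : X × Bool) :
    firstLetter (h * mk [a]) = firstLetter h := by
  have hne : h.toWord ≠ [] := List.ne_nil_of_length_pos (by unfold FreeGroup.norm at hh; omega)
  unfold firstLetter
  rcases toWord_mul_mk_singleton h a with e | e <;> rw [e]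
  · exact List.head?_dropLast.trans (if_pos hh)
  · obtain ⟨b, L, hbL⟩ := List.exists_cons_of_ne_nil hne
    simp [hbL]

theorem firstLetter_mul_mk (L : List (X × Bool)) (h : FreeGroup X) (hL : L.length < h.norm) :
    firstLetter (h * mk L) = firstLetter h := by
  induction L generalizing h with
  | nil => rw [← one_eq_mk, mul_one]
  | cons a L ih =>
    rw [List.length_cons] at hL
    have hnorm := norm_le_norm_mul_add_norm h (mk [a])
    have ha : (mk [a]).norm ≤ 1 := norm_mk_le
    rw [← List.singleton_append, ← mul_mk, ← mul_assoc, ih _ (by omega),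
      firstLetter_mul_mk_singleton (by omega)]

theorem firstLetter_mul_of_norm_lt {g h : FreeGroup X} (hgh : g.norm < h.norm) :
    firstLetter (h * g) = firstLetter h := by
  simpa only [mk_toWord] using firstLetter_mul_mk g.toWord h hgh

theorem finite_setOf_firstLetter_mul_ne [Finite X] (g : FreeGroup X) :
    {h : FreeGroup X | firstLetter (h * g) ≠ firstLetter h}.Finite :=
  (finite_setOf_norm_le g.norm).subset fun _ hh => not_lt.1 (mt firstLetter_mul_of_norm_lt hh)

theorem AlmostEq.exists_forall_norm_gt {β : FreeGroup X → Option (X × Bool)}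
    (hβ : AlmostEq firstLetter β) : ∃ N, ∀ h : FreeGroup X, N < h.norm → firstLetter h = β h := by
  obtain ⟨N, hN⟩ := (hβ.image FreeGroup.norm).bddAbove
  exact ⟨N, fun h hlt => by_contra fun hne => (hN ⟨h, hne, rfl⟩).not_gt hlt⟩

namespace FreeGroup.IsCyclicallyReduced

variable {g : FreeGroup X}

theorem norm_pow (hg : IsCyclicallyReduced g.toWord) (n : ℕ) : (g ^ n).norm = n * g.norm := by
  simp [FreeGroup.norm, hg.toWord_pow]

theorem firstLetter_pow_succ (hg : IsCyclicallyReduced g.toWord) (n : ℕ) :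
    firstLetter (g ^ (n + 1)) = g.toWord.head? := by
  cases h : g.toWord <;> simp [firstLetter, hg.toWord_pow, List.replicate_succ, h]

theorem firstLetter_inv_pow_succ (hg : IsCyclicallyReduced g.toWord) (n : ℕ) :
    firstLetter (g ^ (n + 1))⁻¹ = g.toWord.getLast?.map fun a => (a.1, !a.2) := by
  rcases g.toWord.eq_nil_or_concat' with h | ⟨L, a, h⟩ <;>
    simp [firstLetter, toWord_inv, invRev, hg.toWord_pow, List.replicate_succ', h]

theorem head?_ne_map_getLast? (hg : IsCyclicallyReduced g.toWord) (hg1 : g ≠ 1) :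
    g.toWord.head? ≠ g.toWord.getLast?.map fun a => (a.1, !a.2) := by
  have hne : g.toWord ≠ [] := mt toWord_eq_nil_iff.1 hg1
  rw [List.head?_eq_some_head hne, List.getLast?_eq_some_getLast hne, Option.map_some, ne_eq,
    Option.some_inj]
  intro e
  have h := hg.2 _ (List.getLast?_eq_some_getLast hne) _ (List.head?_eq_some_head hne)
  simp [e] at h

end FreeGroup.IsCyclicallyReduced

theorem eq_one_of_isCyclicallyReduced_of_apply_mul_eq {g : FreeGroup X}
    (hg : IsCyclicallyReduced g.toWord) {β : FreeGroup X → Option (X × Bool)}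
    (hβ : AlmostEq firstLetter β) (hstab : ∀ h, β (h * g) = β h) : g = 1 := by
  by_contra hg1
  obtain ⟨N, hN⟩ := hβ.exists_forall_norm_gt
  have hlarge : N < (g ^ (N + 1)).norm := by
    rw [hg.norm_pow]
    have : 1 ≤ g.norm := Nat.one_le_iff_ne_zero.2 (mt norm_eq_zero.1 hg1)
    nlinarith
  apply hg.head?_ne_map_getLast? hg1
  calc g.toWord.head? = firstLetter (g ^ (N + 1)) := (hg.firstLetter_pow_succ N).symm
    _ = β 1 := by
      rw [hN _ hlarge, ← one_mul (g ^ _), ← zpow_natCast, apply_mul_zpow_eq hstab]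
    _ = β (g ^ (N + 1))⁻¹ := by
      rw [← one_mul (g ^ _)⁻¹, ← zpow_natCast, ← zpow_neg, apply_mul_zpow_eq hstab]
    _ = _ := by rw [← hN _ (by rwa [norm_inv_eq]), hg.firstLetter_inv_pow_succ]

end FirstLetter

theorem eq_one_of_apply_mul_eq {X : Type*} [DecidableEq X] [Finite X]
    {β : FreeGroup X → Option (X × Bool)} (hβ : AlmostEq firstLetter β) {g : FreeGroup X}
    (hstab : ∀ h, β (h * g) = β h) : g = 1 := by
  set u : FreeGroup X := mk (reduceCyclically.conjugator g.toWord)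
  set c : FreeGroup X := mk (reduceCyclically g.toWord)
  have hconj : g = u * c * u⁻¹ := by
    rw [inv_mk, mul_mk, mul_mk, reduceCyclically.conj_conjugator_reduceCyclically, mk_toWord]
  have hc : IsCyclicallyReduced c.toWord := by
    have := reduceCyclically.isCyclicallyReduced (isReduced_toWord (x := g))
    rwa [toWord_mk, this.isReduced.reduce_eq]
  have hc1 : c = 1 := by
    refine eq_one_of_isCyclicallyReduced_of_apply_mul_eq hc
      (hβ.comp_mul_right (finite_setOf_firstLetter_mul_ne u⁻¹)) fun h => ?_
    rw [show h * c * u⁻¹ = h * u⁻¹ * g by rw [hconj]; group, hstab]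
  rw [hconj, hc1, mul_one, mul_inv_cancel]

/-- For a finitely generated free group `G = F(X)`, the first-letter function
`α : G → {1} ∪ X ∪ X⁻¹` is almost-right-invariant, and every `β` almost equal to `α`
has trivial right-stabilizer. -/
theorem freeGroup_firstLetter_almost_invariant {X : Type*} [DecidableEq X] [Finite X] :
    AlmostRightInvariant (firstLetter (X := X)) ∧
      ∀ β : FreeGroup X → Option (X × Bool), AlmostEq (firstLetter (X := X)) β →
        ∀ g : FreeGroup X, (∀ h : FreeGroup X, β (h * g) = β h) → g = 1 :=
  ⟨almostRightInvariant_of_finite finite_setOf_firstLetter_mul_ne,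
    fun _ hβ _ hstab => eq_one_of_apply_mul_eq hβ hstab⟩
end

section
/- Let G be a group with a finite-index subgroup H, let S be a finite set, and let α: H → S be almost-right-H-invariant such that every β: H → S almost equal to α has finite right-H-stabilizer. Then G admits an almost-right-G-invariant function α̂: G → S such that every β̂: G → S almost equal to α̂ has finite right-G-stabilizer. (Explicitly, choosing a left transversal R for H in G and writing g = h_g r_g with h_g ∈ H, r_g ∈ R, the function α̂(g) = α(h_g) works.) -/
lemma ari_of_pointwise {G : Type*} [Group G] {S : Type*} (α : G → S)
    (h : ∀ g : G, {x : G | α (x * g) ≠ α x}.Finite) : AlmostRightInvariant α := by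
  intro g s
  apply Set.Finite.subset ((h g).image (fun x => x * g))
  intro y hy
  rcases Set.mem_symmDiff.1 hy with ⟨⟨x, hx, rfl⟩, hy2⟩ | ⟨hy1, hy2⟩
  · have hxs : α x = s := hx
    refine ⟨x, ?_, rfl⟩
    simp only [Set.mem_setOf_eq, hxs]
    simpa using hy2
  · refine ⟨y * g⁻¹, ?_, by group⟩
    have hxg : (y * g⁻¹) * g = y := by group
    have : α (y * g⁻¹) ≠ s := fun hc => hy2 ⟨y * g⁻¹, hc, hxg⟩
    simp only [Set.mem_setOf_eq, hxg]
    rw [Set.mem_preimage, Set.mem_singleton_iff] at hy1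
    rw [hy1]; exact fun hc => this hc.symm

lemma pointwise_of_ari {G : Type*} [Group G] {S : Type*} [Finite S] (α : G → S)
    (h : AlmostRightInvariant α) (g : G) : {x : G | α (x * g) ≠ α x}.Finite := by
  have hsub : {x : G | α (x * g) ≠ α x} ⊆
      ⋃ s : S, (fun y => y * g⁻¹) ''
        (symmDiff ((fun h => h * g) '' (α ⁻¹' {s})) (α ⁻¹' {s})) := by
    intro x hx
    refine Set.mem_iUnion.2 ⟨α x, ⟨x * g, ?_, by group⟩⟩
    exact Set.mem_symmDiff.2 (Or.inl ⟨⟨x, rfl, rfl⟩, hx⟩)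
  exact Set.Finite.subset (Set.finite_iUnion fun s => (h g s).image _) hsub

/-- If a finite-index subgroup `H` of `G` admits an almost-right-`H`-invariant function
`α : H → S` (with `S` finite) all of whose almost-equal perturbations have finite
right-stabilizer, then `G` admits an almost-right-`G`-invariant function `G → S` all of
whose almost-equal perturbations have finite right-stabilizer. -/
theorem almost_invariant_function_of_finite_index {G : Type*} [Group G]
    (H : Subgroup G) (hH : H.FiniteIndex) (S : Type*) (hS : Finite S)
    (α : H → S) (hα : AlmostRightInvariant α)
    (hstab : ∀ β : H → S, AlmostEq α β → {h : H | ∀ h' : H, β (h' * h) = β h'}.Finite) :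
    ∃ αhat : G → S, AlmostRightInvariant αhat ∧
      ∀ βhat : G → S, AlmostEq αhat βhat →
        {g : G | ∀ g' : G, βhat (g' * g) = βhat g'}.Finite := by
  classical
  haveI := hS
  haveI : Finite (G ⧸ H) := H.finite_quotient_of_finiteIndex
  haveI : Finite (Quotient (QuotientGroup.rightRel H)) :=
    Finite.of_equiv _ (QuotientGroup.quotientRightRelEquivQuotientLeftRel H).symm
  set Q := Quotient (QuotientGroup.rightRel H) with hQ
  let q : G → Q := fun g => Quotient.mk _ g
  let rep : Q → G := fun c => if c = q 1 then 1 else c.out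
  have hrel : ∀ {x y : G}, q x = q y → y * x⁻¹ ∈ H := by
    intro x y hxy
    exact QuotientGroup.rightRel_apply.mp (Quotient.exact hxy)
  have hmem : ∀ g : G, g * (rep (q g))⁻¹ ∈ H := by
    intro g
    by_cases hc : q g = q 1
    · have h1 : g⁻¹ ∈ H := by simpa using hrel hc
      simp only [rep, if_pos hc]
      simpa using H.inv_mem h1
    · simp only [rep, if_neg hc]
      have hout : q ((q g).out) = q g := Quotient.out_eq _
      exact hrel hout
  let π : G → H := fun x => ⟨x * (rep (q x))⁻¹, hmem x⟩
  have hq_mul : ∀ (h : H) (x : G), q ((h : G) * x) = q x := by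
    intro h x
    apply Quotient.sound
    apply QuotientGroup.rightRel_apply.mpr
    have : x * ((h : G) * x)⁻¹ = (h : G)⁻¹ := by group
    rw [this]
    exact H.inv_mem h.2
  have hπ_mul : ∀ (h : H) (x : G), π ((h : G) * x) = h * π x := by
    intro h x
    apply Subtype.ext
    show (h : G) * x * (rep (q ((h : G) * x)))⁻¹ = (h : G) * (x * (rep (q x))⁻¹)
    rw [hq_mul h x, mul_assoc]
  have hfact : ∀ x : G, ((π x : G)) * rep (q x) = x := by
    intro x
    show x * (rep (q x))⁻¹ * rep (q x) = x
    group
  have hπ1 : π 1 = 1 := by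
    apply Subtype.ext
    show (1 : G) * (rep (q 1))⁻¹ = 1
    simp [rep]
  have hπH : ∀ h : H, π (h : G) = h := by
    intro h
    have := hπ_mul h 1
    rw [mul_one, hπ1, mul_one] at this
    exact this
  refine ⟨fun g => α (π g), ?_, ?_⟩
  · -- almost right invariance
    apply ari_of_pointwise
    intro g
    have hsub : {x : G | α (π (x * g)) ≠ α (π x)} ⊆
        ⋃ c : Q, (fun h : H => (h : G) * rep c) ''
          {h : H | α (h * π (rep c * g)) ≠ α h} := by
      intro x hx
      refine Set.mem_iUnion.2 ⟨q x, π x, ?_, hfact x⟩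
      have hxg : x * g = (π x : G) * (rep (q x) * g) := by
        rw [← mul_assoc, hfact x]
      have : π (x * g) = π x * π (rep (q x) * g) := by
        rw [hxg, hπ_mul]
      simpa [this] using hx
    refine Set.Finite.subset (Set.finite_iUnion fun c => ?_) hsub
    exact (pointwise_of_ari α hα (π (rep c * g))).image _
  · -- stabilizer condition
    intro βhat hβ
    let T : Subgroup G :=
      { carrier := {g : G | ∀ g' : G, βhat (g' * g) = βhat g'}
        one_mem' := by intro g'; rw [mul_one]
        mul_mem' := by
          intro a b ha hb g'
          rw [← mul_assoc, hb (g' * a), ha g']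
        inv_mem' := by
          intro a ha g'
          have := ha (g' * a⁻¹)
          rw [inv_mul_cancel_right] at this
          exact this.symm }
    show (T : Set G).Finite
    let β : H → S := fun h => βhat (h : G)
    have hβα : AlmostEq α β := by
      have hsub : {h : H | α h ≠ β h} ⊆
          (fun h : H => (h : G)) ⁻¹' {g : G | α (π g) ≠ βhat g} := by
        intro h hh
        simp only [Set.mem_preimage, Set.mem_setOf_eq, hπH h]
        exact hh
      exact Set.Finite.subset (hβ.preimage (Subtype.coe_injective.injOn)) hsub
    have hSβ := hstab β hβα
    have hTH : ((T : Set G) ∩ (H : Set G)).Finite := by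
      apply Set.Finite.subset (hSβ.image (fun h : H => (h : G)))
      rintro x ⟨hxT, hxH⟩
      refine ⟨⟨x, hxH⟩, ?_, rfl⟩
      intro h'
      exact hxT (h' : G)
    have hsub : (T : Set G) ⊆ ⋃ c : Q, {x : G | x ∈ T ∧ q x = c} := by
      intro x hx
      exact Set.mem_iUnion.2 ⟨q x, hx, rfl⟩
    refine Set.Finite.subset (Set.finite_iUnion fun c => ?_) hsub
    by_cases hne : ({x : G | x ∈ T ∧ q x = c}).Nonempty
    · obtain ⟨y, hyT, hyc⟩ := hne
      apply Set.Finite.subset (hTH.image (fun z => z * y))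
      rintro x ⟨hxT, hxc⟩
      refine ⟨x * y⁻¹, ⟨T.mul_mem hxT (T.inv_mem hyT), ?_⟩, by group⟩
      have : y * x⁻¹ ∈ H := hrel (hxc.trans hyc.symm)
      simpa using H.inv_mem this
    · rw [Set.not_nonempty_iff_eq_empty] at hne
      rw [hne]; exact Set.finite_empty
end

section
/- Let Γ be a connected vertex-transitive locally finite graph whose ends all have diameter < k for a uniform constant k > 0. Then there exists m > 0 such that for all vertices u, v, every geodesic η from u to v, every z on η, and every path γ from u to v, dist(z, γ) ≤ m. -/
/-!
If the theorem fails, moving the bad configurations to a fixed vertex `o` by automorphisms and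
applying König's lemma gives a bi-infinite geodesic `g` through `o` such that for every `s` the
vertices `g s` and `g (-s)` are joined by a path avoiding the ball of radius `s` around `o`.
The end of the ray `g|ℕ` is cut off by a set `B`, as far from `o` as we like, whose boundary has
fewer than `k` vertices. For large `s` the far path puts `g (-s)` in `B` too, so a tight part of
`∂B` separating `o` from `g s` meets both halves of `g` and has large diameter. But tight
separators with fewer than `k` vertices have bounded diameter: up to automorphism there are
finitely many of them, by compactness of `V → Bool`.
-/

/-- The boundary of a set of vertices: its vertices having a neighbour outside. -/
def bdry {V : Type*} (G : SimpleGraph V) (B : Set V) : Set V :=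
  {v | v ∈ B ∧ ∃ u, u ∉ B ∧ G.Adj v u}

/-- An injective infinite path in a graph. -/
def IsInfPath {V : Type*} (G : SimpleGraph V) (p : ℕ → V) : Prop :=
  Function.Injective p ∧ ∀ n : ℕ, G.Adj (p n) (p (n + 1))

/-- The path `p` is almost contained in `B`. -/
def AlmostIn {V : Type*} (p : ℕ → V) (B : Set V) : Prop := {n : ℕ | p n ∉ B}.Finite

/-- Two infinite paths define the same end: they are almost contained in the same sets
with finite boundary. -/
def SameEnd {V : Type*} (G : SimpleGraph V) (p q : ℕ → V) : Prop :=
  ∀ B : Set V, (bdry G B).Finite → (AlmostIn p B ↔ AlmostIn q B)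

/-- The end of `p` has diameter `< k`: there is a nested sequence of sets with boundary of
size `< k` converging to the end of `p` (their closures intersect exactly in this end). -/
def EndDiamLT {V : Type*} (G : SimpleGraph V) (p : ℕ → V) (k : ℕ) : Prop :=
  ∃ B : ℕ → Set V,
    (∀ n : ℕ, (bdry G (B n)).Finite ∧ (bdry G (B n)).ncard < k) ∧
    (∀ n : ℕ, B (n + 1) ⊆ B n) ∧
    (∀ n : ℕ, AlmostIn p (B n)) ∧
    (⋂ n : ℕ, B n) = ∅ ∧
    (∀ q : ℕ → V, IsInfPath G q → (∀ n : ℕ, AlmostIn q (B n)) → SameEnd G p q)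

open Filter Topology in
/-- `T` is an accumulation point of `𝒮` in the Cantor space `α → Bool`. -/
theorem Set.Infinite.exists_ne_inter_eq {α : Type*} {𝒮 : Set (Set α)} (h𝒮 : 𝒮.Infinite) :
    ∃ T : Set α, ∀ F : Set α, F.Finite → ∃ S ∈ 𝒮, S ≠ T ∧ S ∩ F = T ∩ F := by
  classical
  let χ : Set α → α → Bool := fun S x => decide (x ∈ S)
  have hχ : χ.Injective := fun S S' h => Set.ext fun x => by simpa [χ] using congrFun h x
  obtain ⟨f, -, hf⟩ := (h𝒮.image hχ.injOn).exists_accPt_of_subset_isCompact isCompact_univ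
    (Set.subset_univ _)
  have hχf : χ {x | f x} = f := funext fun x => by simp [χ]
  refine ⟨{x | f x}, fun F hF => ?_⟩
  have hU : {g : α → Bool | ∀ x ∈ F, g x = f x} ∈ 𝓝 f :=
    (eventually_all_finite hF).2 fun x _ =>
      (continuous_apply x).continuousAt.preimage_mem_nhds ((isOpen_discrete {f x}).mem_nhds rfl)
  obtain ⟨_, ⟨hSF, S, hS, rfl⟩, hSf⟩ := accPt_iff_nhds.1 hf _ hU
  refine ⟨S, hS, fun h => hSf (h ▸ hχf), Set.ext fun x => ?_⟩
  by_cases hx : x ∈ F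
  · simp [hx, ← hSF x hx, χ]
  · simp [hx]

open Filter in
theorem EndDiamLT.exists_disjoint {V : Type*} {G : SimpleGraph V} {p : ℕ → V} {k : ℕ}
    (h : EndDiamLT G p k) {F : Set V} (hF : F.Finite) :
    ∃ B, (bdry G B).Finite ∧ (bdry G B).encard < k ∧ AlmostIn p B ∧ Disjoint B F := by
  obtain ⟨B, hB, hBsucc, hpB, hBempty, -⟩ := h
  have hanti : Antitone B := antitone_nat_of_succ_le hBsucc
  have hleave : ∀ x ∈ F, ∀ᶠ n in atTop, x ∉ B n := fun x _ => by
    obtain ⟨N, hN⟩ : ∃ N, x ∉ B N := by simpa using Set.eq_empty_iff_forall_notMem.1 hBempty x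
    exact eventually_atTop.2 ⟨N, fun n hn hx => hN (hanti hn hx)⟩
  obtain ⟨n, hn⟩ := ((eventually_all_finite hF).2 hleave).exists
  refine ⟨B n, (hB n).1, ?_, hpB n, Set.disjoint_right.2 hn⟩
  rw [← (hB n).1.cast_ncard_eq]
  exact_mod_cast (hB n).2

open Filter in
theorem AlmostIn.exists_apply_mem_forall_lt {V : Type*} {p : ℕ → V} {B F : Set V}
    (hp : AlmostIn p B) (hF : F.Finite) (f : V → ℕ) : ∃ s, p s ∈ B ∧ ∀ x ∈ F, f x < s := by
  have hpB : ∀ᶠ n in atTop, p n ∈ B := Nat.cofinite_eq_atTop ▸ eventually_cofinite.2 hp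
  exact (hpB.and ((eventually_all_finite hF).2 fun x _ => eventually_gt_atTop (f x))).exists

namespace SimpleGraph

variable {V V' : Type*} {G : SimpleGraph V} {G' : SimpleGraph V'} {u v x y z o : V} {g : ℤ → V}

theorem Hom.edist_le (f : G →g G') (u v : V) : G'.edist (f u) (f v) ≤ G.edist u v := by
  by_cases huv : G.Reachable u v
  · obtain ⟨w, hw⟩ := huv.exists_walk_length_eq_edist
    simpa [hw] using SimpleGraph.edist_le (w.map f)
  · simp [edist_eq_top_of_not_reachable huv]

theorem Iso.dist_eq (e : G ≃g G') (u v : V) : G'.dist (e u) (e v) = G.dist u v := by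
  have h := e.symm.toHom.edist_le (e u) (e v)
  simp only [RelHom.coeFn_mk, RelIso.coe_fn_toEquiv, RelIso.symm_apply_apply] at h
  exact congrArg ENat.toNat (le_antisymm (e.toHom.edist_le u v) h)

theorem Connected.finite_setOf_dist_le (hconn : G.Connected)
    (hlf : ∀ v, (G.neighborSet v).Finite) (o : V) : ∀ R : ℕ, {v | G.dist o v ≤ R}.Finite
  | 0 => (Set.finite_singleton o).subset fun v hv => by
      simpa [eq_comm] using hconn.dist_eq_zero_iff.1 (Nat.le_zero.1 hv)
  | R + 1 => by
    refine ((hconn.finite_setOf_dist_le hlf o R).union ((hconn.finite_setOf_dist_le hlf o R).biUnion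
      fun x _ => hlf x)).subset fun y hy => ?_
    by_cases hyR : G.dist o y ≤ R
    · exact Or.inl hyR
    obtain ⟨p, hp⟩ := hconn.exists_walk_length_eq_dist y o
    have hnil : ¬p.Nil := fun h => hyR (by rw [dist_comm, ← hp, h.length_eq_zero]; omega)
    refine Or.inr (Set.mem_biUnion (x := p.snd) ?_ (p.adj_snd hnil).symm)
    have := dist_le p.tail
    have := p.length_tail_add_one hnil
    simp only [Set.mem_ofPred_eq] at hy ⊢
    rw [dist_comm] at hy ⊢
    omega

namespace Walk

theorem dist_getVert_le (w : G.Walk u v) {i j : ℕ} (hij : i ≤ j) :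
    G.dist (w.getVert i) (w.getVert j) ≤ j - i := by
  have hend : (w.drop i).getVert (j - i) = w.getVert j := by
    rw [drop_getVert, Nat.add_sub_cancel' hij]
  calc _ ≤ _ := dist_le (((w.drop i).take (j - i)).copy rfl hend)
    _ ≤ j - i := by simp [take_length]

theorem dist_getVert_getVert (w : G.Walk u v) (hw : w.length = G.dist u v) {i j : ℕ}
    (hi : i ≤ w.length) (hj : j ≤ w.length) :
    G.dist (w.getVert i) (w.getVert j) = ((i : ℤ) - j).natAbs := by
  wlog hij : i ≤ j generalizing i j
  · rw [dist_comm, this hj hi (by omega)]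
    omega
  have h₁ := (w.take i).reachable.dist_triangle_left v
  have h₂ := ((w.take i).reachable.symm.trans (w.take j).reachable).dist_triangle_left v
  have := w.dist_getVert_le (Nat.zero_le i)
  have := w.dist_getVert_le hij
  have := w.dist_getVert_le hj
  simp only [getVert_zero, getVert_length] at *
  omega

end Walk

def ReachableAvoiding (G : SimpleGraph V) (S : Set V) (x y : V) : Prop :=
  ∃ w : G.Walk x y, ∀ v ∈ w.support, v ∉ S

namespace ReachableAvoiding

variable {S S' : Set V}

theorem refl (hx : x ∉ S) : G.ReachableAvoiding S x x :=
  ⟨.nil, by simpa using hx⟩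

theorem symm (h : G.ReachableAvoiding S x y) : G.ReachableAvoiding S y x :=
  let ⟨w, hw⟩ := h
  ⟨w.reverse, by simpa using hw⟩

theorem trans (h : G.ReachableAvoiding S x y) (h' : G.ReachableAvoiding S y z) :
    G.ReachableAvoiding S x z :=
  let ⟨w, hw⟩ := h
  let ⟨w', hw'⟩ := h'
  ⟨w.append w', fun v hv => (Walk.mem_support_append_iff w w').1 hv |>.elim (hw v) (hw' v)⟩

theorem concat (h : G.ReachableAvoiding S x y) (hyz : G.Adj y z) (hz : z ∉ S) :
    G.ReachableAvoiding S x z :=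
  let ⟨w, hw⟩ := h
  ⟨w.concat hyz, fun v hv => by
    rw [Walk.support_concat, List.mem_append, List.mem_singleton] at hv
    exact hv.elim (hw v) (· ▸ hz)⟩

theorem mono (h : G.ReachableAvoiding S x y) (hS : S' ⊆ S) : G.ReachableAvoiding S' x y :=
  let ⟨w, hw⟩ := h
  ⟨w, fun v hv hvS => hw v hv (hS hvS)⟩

theorem map (f : G →g G') {T : Set V'} (hS : ∀ v, f v ∈ T → v ∈ S)
    (h : G.ReachableAvoiding S x y) : G'.ReachableAvoiding T (f x) (f y) :=
  let ⟨w, hw⟩ := h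
  ⟨w.map f, by simpa [Walk.support_map] using fun v hv hfv => hw v hv (hS v hfv)⟩

theorem mem_of_mem {B : Set V} (h : G.ReachableAvoiding (bdry G B) x y) (hx : x ∈ B) :
    y ∈ B := by
  obtain ⟨w, hw⟩ := h
  induction w with
  | nil => exact hx
  | @cons x x' y hadj w ih =>
    have hx' : x' ∈ B := by_contra fun hx' => hw x (by simp) (by exact ⟨hx, x', hx', hadj⟩)
    exact ih hx' fun v hv => hw v (by simp [hv])

end ReachableAvoiding

theorem Iso.reachableAvoiding_image_iff (e : G ≃g G') {S : Set V} :
    G'.ReachableAvoiding (e '' S) (e x) (e y) ↔ G.ReachableAvoiding S x y :=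
  ⟨fun h => by
      have hS : ∀ v, e.symm.toHom v ∈ S → v ∈ e '' S := fun v hv => ⟨e.symm v, hv, by simp⟩
      simpa using h.map e.symm.toHom hS,
    fun h => h.map e.toHom fun v hv => e.injective.mem_set_image.1 hv⟩

structure IsTightSeparator (G : SimpleGraph V) (S : Set V) (a b : V) : Prop where
  not_reachableAvoiding : ¬G.ReachableAvoiding S a b
  exists_adj_left : ∀ s ∈ S, ∃ c, G.Adj c s ∧ G.ReachableAvoiding S a c
  exists_adj_right : ∀ s ∈ S, ∃ c, G.Adj c s ∧ G.ReachableAvoiding S b c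

namespace IsTightSeparator

variable {S : Set V} {a b : V}

theorem of_reachableAvoiding {a' b' : V} (h : G.IsTightSeparator S a b)
    (ha : G.ReachableAvoiding S a a') (hb : G.ReachableAvoiding S b b') :
    G.IsTightSeparator S a' b' where
  not_reachableAvoiding h' := h.not_reachableAvoiding (ha.trans (h'.trans hb.symm))
  exists_adj_left s hs :=
    let ⟨c, hc, hac⟩ := h.exists_adj_left s hs
    ⟨c, hc, ha.symm.trans hac⟩
  exists_adj_right s hs :=
    let ⟨c, hc, hbc⟩ := h.exists_adj_right s hs
    ⟨c, hc, hb.symm.trans hbc⟩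

theorem image (e : G ≃g G') (h : G.IsTightSeparator S a b) :
    G'.IsTightSeparator (e '' S) (e a) (e b) where
  not_reachableAvoiding h' := h.not_reachableAvoiding (e.reachableAvoiding_image_iff.1 h')
  exists_adj_left := by
    rintro _ ⟨s, hs, rfl⟩
    obtain ⟨c, hc, hac⟩ := h.exists_adj_left s hs
    exact ⟨e c, e.map_adj_iff.2 hc, e.reachableAvoiding_image_iff.2 hac⟩
  exists_adj_right := by
    rintro _ ⟨s, hs, rfl⟩
    obtain ⟨c, hc, hbc⟩ := h.exists_adj_right s hs
    exact ⟨e c, e.map_adj_iff.2 hc, e.reachableAvoiding_image_iff.2 hbc⟩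

end IsTightSeparator

theorem Walk.exists_adj_reachableAvoiding {S : Set V} {s a : V} (w : G.Walk a y)
    (hw : ∀ v ∈ w.support, v ∉ S \ {s}) (hs : s ∈ w.support) (has : a ≠ s) :
    ∃ c, G.Adj c s ∧ G.ReachableAvoiding S a c := by
  have ha : a ∉ S := fun haS => hw a w.start_mem_support ⟨haS, has⟩
  induction w with
  | nil => exact absurd (by simpa using hs) has.symm
  | @cons a a' y hadj w ih =>
    by_cases ha's : a' = s
    · exact ⟨a, ha's ▸ hadj, .refl ha⟩
    have ha' : a' ∉ S := fun ha'S => hw a' (by simp) ⟨ha'S, ha's⟩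
    obtain ⟨c, hc, hac⟩ := ih (fun v hv => hw v (by simp [hv]))
      (by simpa [Ne.symm has] using hs) ha's ha'
    exact ⟨c, hc, ((ReachableAvoiding.refl ha).concat hadj ha').trans hac⟩

/-- A minimal separator is tight. -/
theorem exists_isTightSeparator_subset {S : Set V} {a b : V} (hS : S.Finite) (ha : a ∉ S)
    (hb : b ∉ S) (hab : ¬G.ReachableAvoiding S a b) : ∃ T ⊆ S, G.IsTightSeparator T a b := by
  obtain ⟨T, ⟨hTS, hT⟩, hmin⟩ := Set.Finite.exists_minimal
    (hS.finite_subsets.subset fun T hT => hT.1 : {T | T ⊆ S ∧ ¬G.ReachableAvoiding T a b}.Finite)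
    ⟨S, subset_rfl, hab⟩
  have hwalk : ∀ s ∈ T, ∃ w : G.Walk a b, (∀ v ∈ w.support, v ∉ T \ {s}) ∧ s ∈ w.support := by
    intro s hs
    obtain ⟨w, hw⟩ : G.ReachableAvoiding (T \ {s}) a b := by
      by_contra h
      exact (hmin ⟨Set.sdiff_subset.trans hTS, h⟩ Set.sdiff_subset hs).2 rfl
    refine ⟨w, hw, by_contra fun hsw => hT ⟨w, fun v hv hvT => hw v hv ⟨hvT, ?_⟩⟩⟩
    rintro rfl
    exact hsw hv
  refine ⟨T, hTS, hT, fun s hs => ?_, fun s hs => ?_⟩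
  · obtain ⟨w, hw, hsw⟩ := hwalk s hs
    exact w.exists_adj_reachableAvoiding hw hsw fun h => ha (hTS (h ▸ hs))
  · obtain ⟨w, hw, hsw⟩ := hwalk s hs
    exact w.reverse.exists_adj_reachableAvoiding (by simpa using hw) (by simpa using hsw)
      fun h => hb (hTS (h ▸ hs))

theorem finite_setOf_isTightSeparator (a b : V) (k : ℕ) :
    {S : Set V | S.encard < k ∧ G.IsTightSeparator S a b}.Finite := by
  by_contra h
  obtain ⟨T, hT⟩ := Set.Infinite.exists_ne_inter_eq h
  have hsub : ∀ F ⊆ T, F.Finite →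
      ∃ S : Set V, S.encard < k ∧ G.IsTightSeparator S a b ∧ F ⊆ S := by
    intro F hFT hF
    obtain ⟨S, ⟨hSk, hS⟩, -, hSF⟩ := hT F hF
    exact ⟨S, hSk, hS, fun x hx => (hSF.symm ▸ ⟨hFT hx, hx⟩ : x ∈ S ∩ F).1⟩
  have hTk : T.encard < k := by
    by_contra! hkT
    obtain ⟨F, hFT, hF⟩ := Set.exists_subset_encard_eq hkT
    obtain ⟨S, hSk, -, hFS⟩ := hsub F hFT (Set.finite_of_encard_eq_coe hF)
    exact (hF ▸ Set.encard_le_encard hFS).not_gt hSk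
  have hsep : ¬G.ReachableAvoiding T a b := by
    rintro ⟨w, hw⟩
    obtain ⟨S, ⟨-, hS⟩, -, hSF⟩ := hT {x | x ∈ w.support} w.support.finite_toSet
    refine hS.not_reachableAvoiding ⟨w, fun v hv hvS => hw v hv ?_⟩
    exact (hSF ▸ ⟨hvS, hv⟩ : v ∈ T ∩ {x | x ∈ w.support}).1
  obtain ⟨S, ⟨-, hS⟩, hST, hSF⟩ := hT T (Set.finite_of_encard_le_coe hTk.le)
  have hTS : T ⊆ S := fun x hx => (hSF.symm ▸ ⟨hx, hx⟩ : x ∈ S ∩ T).1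
  -- A vertex of `S` outside `T` would connect the two sides of `T`.
  obtain ⟨s, hs, hsT⟩ := Set.exists_of_ssubset (hTS.ssubset_of_ne hST.symm)
  obtain ⟨c, hc, hac⟩ := hS.exists_adj_left s hs
  obtain ⟨d, hd, hbd⟩ := hS.exists_adj_right s hs
  exact hsep (((hac.mono hTS).concat hc hsT).trans ((hbd.mono hTS).concat hd hsT).symm)

theorem exists_dist_le_of_isTightSeparator (hlf : ∀ v, (G.neighborSet v).Finite)
    (htrans : ∀ u v : V, ∃ e : G ≃g G, e u = v) (k : ℕ) :
    ∃ D : ℕ, ∀ (S : Set V) a b, S.encard < k → G.IsTightSeparator S a b →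
      ∀ x ∈ S, ∀ y ∈ S, G.dist x y ≤ D := by
  rcases isEmpty_or_nonempty V with _ | ⟨⟨o⟩⟩
  · exact ⟨0, fun S _ _ _ _ x => isEmptyElim x⟩
  -- Up to automorphism, every tight separator contains `o` and has both sides adjacent to `o`.
  let 𝒯 := ⋃ a ∈ G.neighborSet o, ⋃ b ∈ G.neighborSet o,
    {S : Set V | S.encard < k ∧ G.IsTightSeparator S a b}
  have h𝒯 : 𝒯.Finite := (hlf o).biUnion fun a _ => (hlf o).biUnion fun b _ =>
    finite_setOf_isTightSeparator a b k
  have hpairs : (⋃ S ∈ 𝒯, S ×ˢ S).Finite := h𝒯.biUnion fun S hS => by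
    simp only [𝒯, Set.mem_iUnion] at hS
    obtain ⟨_, _, _, _, hSk, -⟩ := hS
    have hSfin := Set.finite_of_encard_le_coe hSk.le
    exact hSfin.prod hSfin
  obtain ⟨D, hD⟩ := (hpairs.image fun p => G.dist p.1 p.2).bddAbove
  refine ⟨D, fun S a b hSk hS x hx y hy => ?_⟩
  obtain ⟨e, hex⟩ := htrans x o
  have ho : o ∈ e '' S := ⟨x, hx, hex⟩
  obtain ⟨c, hc, hac⟩ := (hS.image e).exists_adj_left o ho
  obtain ⟨d, hd, hbd⟩ := (hS.image e).exists_adj_right o ho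
  have he𝒯 : e '' S ∈ 𝒯 := Set.mem_biUnion hc.symm (Set.mem_biUnion hd.symm
    ⟨e.injective.encard_image S ▸ hSk, (hS.image e).of_reachableAvoiding hac hbd⟩)
  rw [← e.dist_eq]
  exact hD ⟨(e x, e y), Set.mem_biUnion he𝒯 ⟨⟨x, hx, rfl⟩, ⟨y, hy, rfl⟩⟩, rfl⟩

def IsGeodesicOn (G : SimpleGraph V) (g : ℤ → V) (I : Set ℤ) : Prop :=
  ∀ i ∈ I, ∀ j ∈ I, G.dist (g i) (g j) = (i - j).natAbs

theorem IsGeodesicOn.mono {I J : Set ℤ} (h : G.IsGeodesicOn g I) (hJI : J ⊆ I) :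
    G.IsGeodesicOn g J :=
  fun i hi j hj => h i (hJI hi) j (hJI hj)

theorem IsGeodesicOn.reachableAvoiding {I : Set ℤ} {S : Set V} {a b : ℤ}
    (h : G.IsGeodesicOn g I) (hab : a ≤ b) (hI : Set.Icc a b ⊆ I)
    (hS : ∀ i ∈ Set.Icc a b, g i ∉ S) : G.ReachableAvoiding S (g a) (g b) := by
  induction b, hab using Int.leInduction with
  | base => exact .refl (hS a ⟨le_rfl, le_rfl⟩)
  | succ b hab ih =>
    have hsub : Set.Icc a b ⊆ Set.Icc a (b + 1) := Set.Icc_subset_Icc_right (by omega)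
    have hadj : G.Adj (g b) (g (b + 1)) := by
      rw [← dist_eq_one_iff_adj, h b (hI ⟨hab, by omega⟩) (b + 1) (hI ⟨by omega, le_rfl⟩)]
      omega
    exact (ih (hsub.trans hI) fun i hi => hS i (hsub hi)).concat hadj (hS _ ⟨by omega, le_rfl⟩)

structure IsDetour (G : SimpleGraph V) (o : V) (s : ℕ) (g : ℤ → V) : Prop where
  apply_zero : g 0 = o
  isGeodesicOn : G.IsGeodesicOn g (Set.Icc (-s) s)
  reachableAvoiding : G.ReachableAvoiding {v | G.dist o v < s} (g s) (g (-s))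

namespace IsDetour

variable {s : ℕ}

theorem dist_apply (h : G.IsDetour o s g) {i : ℤ} (hi : i ∈ Set.Icc (-s : ℤ) s) :
    G.dist o (g i) = i.natAbs := by
  rw [← h.apply_zero, h.isGeodesicOn 0 ⟨by omega, by omega⟩ i hi]
  omega

theorem congr {f : ℤ → V} (h : G.IsDetour o s g) (hfg : Set.EqOn f g (Set.Icc (-s) s)) :
    G.IsDetour o s f where
  apply_zero := (hfg ⟨by omega, by omega⟩).trans h.apply_zero
  isGeodesicOn i hi j hj := by rw [hfg hi, hfg hj]; exact h.isGeodesicOn i hi j hj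
  reachableAvoiding := by
    rw [hfg ⟨by omega, le_rfl⟩, hfg ⟨le_rfl, by omega⟩]
    exact h.reachableAvoiding

theorem map (e : G ≃g G') (h : G.IsDetour o s g) : G'.IsDetour (e o) s (e ∘ g) where
  apply_zero := congrArg e h.apply_zero
  isGeodesicOn i hi j hj := by simpa [e.dist_eq] using h.isGeodesicOn i hi j hj
  reachableAvoiding := h.reachableAvoiding.map e.toHom fun v hv => by simpa [e.dist_eq] using hv

end IsDetour

theorem isDetour_of_isGeodesicOn {s : ℕ} {a b : ℤ} (ha : a ≤ -s) (hb : s ≤ b)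
    (hg : G.IsGeodesicOn g (Set.Icc a b)) (h0 : g 0 = o)
    (hreach : G.ReachableAvoiding {v | G.dist o v < s} (g b) (g a)) : G.IsDetour o s g where
  apply_zero := h0
  isGeodesicOn := hg.mono (Set.Icc_subset_Icc ha hb)
  reachableAvoiding := by
    have hfar : ∀ i ∈ Set.Icc a b, s ≤ i.natAbs → g i ∉ {v | G.dist o v < s} := by
      intro i hi hsi
      simp only [Set.mem_ofPred_eq, not_lt, ← h0, hg 0 ⟨by omega, by omega⟩ i hi]
      omega
    refine ((hg.reachableAvoiding hb (Set.Icc_subset_Icc (by omega) le_rfl)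
      fun i ⟨hi₁, hi₂⟩ => hfar i ⟨by omega, hi₂⟩ (by omega)).trans hreach).trans
      (hg.reachableAvoiding ha (Set.Icc_subset_Icc le_rfl (by omega))
        fun i ⟨hi₁, hi₂⟩ => hfar i ⟨hi₁, by omega⟩ (by omega))

theorem IsDetour.mono {s t : ℕ} (h : G.IsDetour o t g) (hst : s ≤ t) : G.IsDetour o s g :=
  isDetour_of_isGeodesicOn (by omega) (by omega) h.isGeodesicOn h.apply_zero
    (h.reachableAvoiding.mono fun _ hv => lt_of_lt_of_le hv (by exact_mod_cast hst))

theorem Connected.finite_setOf_isDetour (hconn : G.Connected)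
    (hlf : ∀ v, (G.neighborSet v).Finite) (o : V) (s : ℕ) :
    {g : ℤ → V | G.IsDetour o s g ∧ ∀ i ∉ Set.Icc (-s : ℤ) s, g i = o}.Finite := by
  refine Set.Finite.of_finite_image (f := fun g (i : Set.Icc (-s : ℤ) s) => g i) ?_ ?_
  · refine (Set.Finite.pi (t := fun _ => {v | G.dist o v ≤ s})
      fun _ => hconn.finite_setOf_dist_le hlf o s).subset ?_
    rintro _ ⟨g, ⟨hg, -⟩, rfl⟩ i -
    have := hg.dist_apply i.2
    have := i.2
    simp only [Set.mem_Icc] at this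
    simp only [Set.mem_ofPred_eq]
    omega
  · rintro g ⟨-, hg⟩ g' ⟨-, hg'⟩ hgg'
    funext i
    by_cases hi : i ∈ Set.Icc (-s : ℤ) s
    · exact congrFun hgg' ⟨i, hi⟩
    · rw [hg i hi, hg' i hi]

/-- König's lemma. -/
theorem Connected.exists_forall_isDetour (hconn : G.Connected)
    (hlf : ∀ v, (G.neighborSet v).Finite) (h : ∀ s, ∃ g, G.IsDetour o s g) :
    ∃ g, ∀ s, G.IsDetour o s g := by
  let cut (s : ℕ) (g : ℤ → V) : ℤ → V := (Set.Icc (-s : ℤ) s).piecewise g fun _ => o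
  have hcut : ∀ {s t : ℕ}, s ≤ t → ∀ g, G.IsDetour o t g →
      G.IsDetour o s (cut s g) ∧ ∀ i ∉ Set.Icc (-s : ℤ) s, cut s g i = o :=
    fun hst g hg => ⟨(hg.mono hst).congr fun i hi => Set.piecewise_eq_of_mem _ _ _ hi,
      fun i hi => Set.piecewise_eq_of_notMem _ _ _ hi⟩
  -- Normalising detours to be `o` off `[-s, s]` makes each level finite.
  let α (s : ℕ) := {g : ℤ → V // G.IsDetour o s g ∧ ∀ i ∉ Set.Icc (-s : ℤ) s, g i = o}
  have : ∀ s, Finite (α s) := fun s => (hconn.finite_setOf_isDetour hlf o s).to_subtype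
  have : ∀ s, Nonempty (α s) := fun s =>
    let ⟨g, hg⟩ := h s
    ⟨⟨cut s g, hcut le_rfl g hg⟩⟩
  obtain ⟨f, hf⟩ := exists_seq_forall_proj_of_forall_finite (α := α)
    (fun hst g => ⟨cut _ g.1, hcut hst g.1 g.2.1⟩)
    (fun s g => Subtype.ext <| funext fun i => by
      by_cases hi : i ∈ Set.Icc (-s : ℤ) s <;> simp [cut, hi, g.2.2 i])
    (fun s t u hst htu g => Subtype.ext <| funext fun i => by
      by_cases hi : i ∈ Set.Icc (-s : ℤ) s
      · have : i ∈ Set.Icc (-t : ℤ) t := ⟨by have := hi.1; omega, by have := hi.2; omega⟩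
        simp [cut, hi, this]
      · simp [cut, hi])
    fun _ _ => Set.toFinite _
  refine ⟨fun i => (f i.natAbs).1 i, fun s => (f s).2.1.congr fun i hi => ?_⟩
  obtain ⟨hi₁, hi₂⟩ := hi
  rw [← hf (show i.natAbs ≤ s by omega)]
  exact Set.piecewise_eq_of_mem (Set.Icc (-(i.natAbs : ℤ)) i.natAbs) (f s).1 (fun _ => o)
    ⟨by omega, by omega⟩

theorem isInfPath_of_forall_isDetour (h : ∀ s, G.IsDetour o s g) :
    IsInfPath G fun n : ℕ => g n := by
  refine ⟨fun m n hmn => ?_, fun n => ?_⟩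
  · have := (h (max m n)).isGeodesicOn m ⟨by omega, by omega⟩ n ⟨by omega, by omega⟩
    rw [show g m = g n from hmn, dist_self] at this
    omega
  · rw [← dist_eq_one_iff_adj, (h (n + 1)).isGeodesicOn n ⟨by omega, by omega⟩ (n + 1 : ℕ)
      ⟨by omega, by omega⟩]
    omega

theorem exists_isDetour_of_walk {u v z : V} {s : ℕ} {η : G.Walk u v} (hη : η.length = G.dist u v)
    (hz : z ∈ η.support) {γ : G.Walk u v} (hγ : ∀ x ∈ γ.support, s ≤ G.dist z x) :
    ∃ g, G.IsDetour z s g := by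
  obtain ⟨t, rfl, ht⟩ := Walk.mem_support_iff_exists_getVert.1 hz
  have hdist {i j : ℕ} (hi : i ≤ η.length) (hj : j ≤ η.length) :=
    η.dist_getVert_getVert hη hi hj
  have hsu : s ≤ t := by
    have hu := hdist ht (Nat.zero_le _)
    rw [η.getVert_zero] at hu
    have := hγ u γ.start_mem_support
    omega
  have hsv : s ≤ η.length - t := by
    have hv := hdist ht le_rfl
    rw [η.getVert_length] at hv
    have := hγ v γ.end_mem_support
    omega
  refine ⟨fun i => η.getVert (t + i).toNat, isDetour_of_isGeodesicOn (a := -t)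
    (b := η.length - t) (by omega) (by omega) (fun i ⟨hi₁, hi₂⟩ j ⟨hj₁, hj₂⟩ => ?_) (by simp) ?_⟩
  · rw [hdist (by omega) (by omega)]
    omega
  · have hb : ((t : ℤ) + (η.length - t)).toNat = η.length := by omega
    simp only [add_neg_cancel, Int.toNat_zero, hb, η.getVert_zero, η.getVert_length]
    exact ⟨γ.reverse, by simpa using hγ⟩

theorem IsDetour.exists_isTightSeparator_subset_bdry {s : ℕ} {B : Set V} (hg : G.IsDetour o s g)
    (hB : (bdry G B).Finite) (hs : g s ∈ B) (ho : o ∉ B) (hbdry : ∀ x ∈ bdry G B, G.dist o x < s) :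
    ∃ T ⊆ bdry G B, (∃ a b, G.IsTightSeparator T a b) ∧
      ∃ i ∈ Set.Icc (0 : ℤ) s, ∃ j ∈ Set.Icc (-s : ℤ) 0, g i ∈ T ∧ g j ∈ T := by
  have hreach : G.ReachableAvoiding (bdry G B) (g s) (g (-s)) := hg.reachableAvoiding.mono hbdry
  have hgs : g s ∉ bdry G B := fun h => by
    simpa [hg.dist_apply ⟨by omega, le_rfl⟩] using hbdry _ h
  obtain ⟨T, hTB, hT⟩ := exists_isTightSeparator_subset hB (fun h => ho h.1) hgs
    fun h => ho (h.symm.mem_of_mem hs)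
  have hmeet : ∀ {a b : ℤ}, a ≤ b → Set.Icc a b ⊆ Set.Icc (-s : ℤ) s →
      ¬G.ReachableAvoiding T (g a) (g b) → ∃ i ∈ Set.Icc a b, g i ∈ T := fun hab hI h => by
    by_contra! hT
    exact h (hg.isGeodesicOn.reachableAvoiding hab hI hT)
  -- `T` separates `o = g 0` from `g s`, which is joined to `g (-s)` outside `T`.
  obtain ⟨i, hi, hiT⟩ := hmeet (by omega) (Set.Icc_subset_Icc (by omega) le_rfl)
    (hg.apply_zero ▸ hT.not_reachableAvoiding)
  obtain ⟨j, hj, hjT⟩ := hmeet (by omega) (Set.Icc_subset_Icc le_rfl (by omega))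
    fun h => hT.not_reachableAvoiding (hg.apply_zero ▸ h.symm.trans (hreach.mono hTB).symm)
  exact ⟨T, hTB, ⟨_, _, hT⟩, i, hi, j, hj, hiT, hjT⟩

end SimpleGraph

theorem ends_bounded_diam_imp_geodesic_path_condition_general {V : Type*} (G : SimpleGraph V)
    (hconn : G.Connected) (hlf : ∀ v : V, (G.neighborSet v).Finite)
    (htrans : ∀ u v : V, ∃ e : G ≃g G, e u = v)
    (k : ℕ) (hends : ∀ p : ℕ → V, IsInfPath G p → EndDiamLT G p k) :
    ∃ m : ℕ, 0 < m ∧ ∀ (u v : V) (η : G.Walk u v), η.length = G.dist u v →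
      ∀ z ∈ η.support, ∀ γ : G.Walk u v, ∃ x ∈ γ.support, G.dist z x ≤ m := by
  obtain ⟨D, hD⟩ := SimpleGraph.exists_dist_le_of_isTightSeparator hlf htrans k
  by_contra! hfar
  obtain ⟨o⟩ := hconn.nonempty
  have hdetour : ∀ s, ∃ g, G.IsDetour o s g := fun s => by
    obtain ⟨u, v, η, hη, z, hz, γ, hγ⟩ := hfar (s + 1) s.succ_pos
    obtain ⟨g, hg⟩ := SimpleGraph.exists_isDetour_of_walk hη hz fun x hx =>
      (hγ x hx).le.trans' s.le_succ
    obtain ⟨e, rfl⟩ := htrans z o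
    exact ⟨_, hg.map e⟩
  obtain ⟨g, hg⟩ := hconn.exists_forall_isDetour hlf hdetour
  obtain ⟨B, hBfin, hBk, hgB, hBo⟩ :=
    (hends _ (SimpleGraph.isInfPath_of_forall_isDetour hg)).exists_disjoint
      (hconn.finite_setOf_dist_le hlf o D)
  have hBfar : ∀ x ∈ B, D < G.dist o x := fun x hx => not_le.1 (hBo.notMem_of_mem_left hx)
  obtain ⟨s, hsB, hs⟩ := hgB.exists_apply_mem_forall_lt hBfin (G.dist o)
  obtain ⟨T, hTB, ⟨a, b, hT⟩, i, ⟨hi₀, hi⟩, j, ⟨hj, hj₀⟩, hiT, hjT⟩ :=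
    (hg s).exists_isTightSeparator_subset_bdry hBfin hsB (fun ho => by simpa using hBfar o ho) hs
  have hgij := hD T a b ((Set.encard_le_encard hTB).trans_lt hBk) hT _ hiT _ hjT
  have hgi := hBfar _ (hTB hiT).1
  rw [(hg s).isGeodesicOn i ⟨by omega, hi⟩ j ⟨hj, by omega⟩] at hgij
  rw [(hg s).dist_apply ⟨by omega, hi⟩] at hgi
  omega

/-- If all the ends of a connected, locally finite, vertex-transitive graph have diameter
`< k`, then there is `m > 0` such that every vertex on a geodesic between `u` and `v` is
at distance at most `m` from every path between `u` and `v`. -/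
theorem ends_bounded_diam_imp_geodesic_path_condition {V : Type*} (G : SimpleGraph V)
    (hconn : G.Connected) (hlf : ∀ v : V, (G.neighborSet v).Finite)
    (htrans : ∀ u v : V, ∃ e : G ≃g G, e u = v)
    (k : ℕ) (hk : 0 < k) (hends : ∀ p : ℕ → V, IsInfPath G p → EndDiamLT G p k) :
    ∃ m : ℕ, 0 < m ∧ ∀ (u v : V) (η : G.Walk u v), η.length = G.dist u v →
      ∀ z ∈ η.support, ∀ γ : G.Walk u v, ∃ x ∈ γ.support, G.dist z x ≤ m :=
  ends_bounded_diam_imp_geodesic_path_condition_general G hconn hlf htrans k hends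
end
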